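/- arXiv:1212.5895 — 8 statements merged into one kernel-verified Lean document; each statement's English description precedes it below -/
import Mathlib

section
/- A program P is super-coherent if and only if for each set F of atoms with F ⊆ At(P) (the atoms occurring in P), the program P ∪ F has at least one answer set. -/
structure Rule (A : Type) where
  head : Set A
  pos : Set A
  neg : Set A

abbrev Program (A : Type) := Set (Rule A)

def satRule {A : Type} (I : Set A) (r : Rule A) : Prop :=
  r.pos ⊆ I → r.neg ∩ I = ∅ → (r.head ∩ I).Nonempty

def isModel {A : Type} (P : Program A) (I : Set A) : Prop := ∀ r ∈ P, satRule I r

def reduct {A : Type} (P : Program A) (K : Set A) : Program A :=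
  {r' | ∃ r ∈ P, r.neg ∩ K = ∅ ∧ r' = ⟨r.head, r.pos, ∅⟩}

def isAnswerSet {A : Type} (P : Program A) (M : Set A) : Prop :=
  isModel (reduct P M) M ∧ ∀ N ⊆ M, isModel (reduct P M) N → N = M

def factsOf {A : Type} (F : Set A) : Program A := {r | ∃ a ∈ F, r = ⟨{a}, ∅, ∅⟩}

def superCoherent {A : Type} (P : Program A) : Prop :=
  ∀ F : Set A, ∃ M, isAnswerSet (P ∪ factsOf F) M

def atomsOf {A : Type} (P : Program A) : Set A :=
  ⋃ r ∈ P, (r.head ∪ r.pos ∪ r.neg)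

lemma reduct_union {A : Type} (P Q : Program A) (K : Set A) :
    reduct (P ∪ Q) K = reduct P K ∪ reduct Q K := by
  ext r'
  constructor
  · rintro ⟨r, (hr | hr), h⟩
    · exact Or.inl ⟨r, hr, h⟩
    · exact Or.inr ⟨r, hr, h⟩
  · rintro (⟨r, hr, h⟩ | ⟨r, hr, h⟩)
    · exact ⟨r, Or.inl hr, h⟩
    · exact ⟨r, Or.inr hr, h⟩

lemma reduct_facts {A : Type} (F : Set A) (K : Set A) :
    reduct (factsOf F) K = factsOf F := by
  ext r'
  constructor
  · rintro ⟨r, ⟨a, ha, rfl⟩, _, rfl⟩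
    exact ⟨a, ha, rfl⟩
  · rintro ⟨a, ha, rfl⟩
    exact ⟨⟨{a}, ∅, ∅⟩, ⟨a, ha, rfl⟩, by simp, rfl⟩

lemma subset_atomsOf {A : Type} {P : Program A} {r : Rule A} (hr : r ∈ P) :
    r.head ∪ r.pos ∪ r.neg ⊆ atomsOf P := by
  intro a ha
  exact Set.mem_biUnion hr ha

/-- P is super-coherent iff P ∪ F has an answer set for every F ⊆ At(P). -/
theorem superCoherent_iff_restrict {A : Type} (P : Program A) :
    superCoherent P ↔ ∀ F ⊆ atomsOf P, ∃ M, isAnswerSet (P ∪ factsOf F) M := by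
  constructor
  · intro h F _; exact h F
  · intro h F
    set F₁ : Set A := F ∩ atomsOf P with hF₁
    set F₂ : Set A := F \ atomsOf P with hF₂
    have hF₂d : ∀ a ∈ F₂, a ∉ atomsOf P := fun a ha => ha.2
    obtain ⟨M, hMmod, hMmin⟩ := h F₁ Set.inter_subset_right
    refine ⟨M ∪ F₂, ?_, ?_⟩
    · -- model of reduct
      have hred : reduct P (M ∪ F₂) = reduct P M := by
        ext r'
        constructor
        · rintro ⟨r, hr, hneg, rfl⟩
          refine ⟨r, hr, ?_, rfl⟩
          apply Set.eq_empty_of_subset_empty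
          intro a ⟨ha1, ha2⟩
          exact hneg.subset ⟨ha1, Or.inl ha2⟩
        · rintro ⟨r, hr, hneg, rfl⟩
          refine ⟨r, hr, ?_, rfl⟩
          apply Set.eq_empty_of_subset_empty
          rintro a ⟨ha1, (ha2 | ha2)⟩
          · exact hneg.subset ⟨ha1, ha2⟩
          · exact absurd (subset_atomsOf hr (Or.inr ha1)) (hF₂d a ha2)
      rw [reduct_union, hred, reduct_facts]
      rintro r' (hr' | ⟨a, ha, rfl⟩)
      · obtain ⟨r, hr, hneg, rfl⟩ := hr'
        intro hpos _
        have hpos' : r.pos ⊆ M := by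
          intro a ha
          rcases hpos ha with h1 | h1
          · exact h1
          · exact absurd (subset_atomsOf hr (Or.inl (Or.inr ha))) (hF₂d a h1)
        have : (r.head ∩ M).Nonempty := by
          have := hMmod ⟨r.head, r.pos, ∅⟩
          rw [reduct_union, reduct_facts] at this
          exact this (Or.inl ⟨r, hr, hneg, rfl⟩) hpos' (by simp)
        exact this.mono (Set.inter_subset_inter_right _ Set.subset_union_left)
      · intro _ _
        by_cases haP : a ∈ atomsOf P
        · have haM : a ∈ M := by
            have := hMmod ⟨{a}, ∅, ∅⟩
            rw [reduct_union, reduct_facts] at this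
            have := this (Or.inr ⟨a, ⟨ha, haP⟩, rfl⟩) (by simp) (by simp)
            obtain ⟨b, hb1, hb2⟩ := this
            rwa [show b = a from hb1] at hb2
          exact ⟨a, rfl, Or.inl haM⟩
        · exact ⟨a, rfl, Or.inr ⟨ha, haP⟩⟩
    · -- minimality
      intro N hN hNmod
      have hred : reduct P (M ∪ F₂) = reduct P M := by
        ext r'
        constructor
        · rintro ⟨r, hr, hneg, rfl⟩
          refine ⟨r, hr, ?_, rfl⟩
          apply Set.eq_empty_of_subset_empty
          intro a ⟨ha1, ha2⟩
          exact hneg.subset ⟨ha1, Or.inl ha2⟩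
        · rintro ⟨r, hr, hneg, rfl⟩
          refine ⟨r, hr, ?_, rfl⟩
          apply Set.eq_empty_of_subset_empty
          rintro a ⟨ha1, (ha2 | ha2)⟩
          · exact hneg.subset ⟨ha1, ha2⟩
          · exact absurd (subset_atomsOf hr (Or.inr ha1)) (hF₂d a ha2)
      rw [reduct_union, hred, reduct_facts] at hNmod
      -- facts force F ⊆ N
      have hFN : F ⊆ N := by
        intro a ha
        have := hNmod ⟨{a}, ∅, ∅⟩ (Or.inr ⟨a, ha, rfl⟩) (by simp) (by simp)
        obtain ⟨b, hb1, hb2⟩ := this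
        rwa [show b = a from hb1] at hb2
      -- N ∩ M is a model of reduct (P ∪ factsOf F₁) M
      have hN'mod : isModel (reduct (P ∪ factsOf F₁) M) (N ∩ M) := by
        rw [reduct_union, reduct_facts]
        rintro r' (hr' | ⟨a, ha, rfl⟩)
        · obtain ⟨r, hr, hneg, rfl⟩ := hr'
          intro hpos _
          have hposN : r.pos ⊆ N := hpos.trans Set.inter_subset_left
          obtain ⟨b, hb1, hb2⟩ := hNmod ⟨r.head, r.pos, ∅⟩ (Or.inl ⟨r, hr, hneg, rfl⟩) hposN (by simp)
          have hbM : b ∈ M := by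
            rcases hN hb2 with h1 | h1
            · exact h1
            · exact absurd (subset_atomsOf hr (Or.inl (Or.inl hb1))) (hF₂d b h1)
          exact ⟨b, hb1, hb2, hbM⟩
        · intro _ _
          have haN : a ∈ N := hFN ha.1
          have haM : a ∈ M := by
            rcases hN haN with h1 | h1
            · exact h1
            · exact absurd ha.2 (hF₂d a h1)
          exact ⟨a, rfl, haN, haM⟩
      have hNM : N ∩ M = M := hMmin (N ∩ M) Set.inter_subset_right hN'mod
      have hMN : M ⊆ N := by
        rw [← hNM]; exact Set.inter_subset_left
      apply Set.Subset.antisymm hN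
      exact Set.union_subset hMN (fun a ha => hFN ha.1)
end

section
/- Let P be a Φ-reduction for a QBF Φ = ∀X∃Y∀Z φ with φ in DNF (as specified in the context). If Φ is false, then P is not super-coherent: specifically, there exists I ⊆ X such that adding the facts F_I = I ∪ {x̄ : x ∈ X \ I} yields AS(P ∪ F_I) = ∅. -/
def Uall {A : Type} (X Y Z : Set A) (bar : A → A) (u v w : A) : Set A :=
  X ∪ Y ∪ Z ∪ bar '' X ∪ bar '' Y ∪ bar '' Z ∪ {u, v, w}

def Mmod {A : Type} (X Y Z : Set A) (bar : A → A) (u v : A) (I J : Set A) : Set A :=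
  I ∪ bar '' (X \ I) ∪ J ∪ bar '' (Y \ J) ∪ Z ∪ bar '' Z ∪ {u, v}

def Mmod' {A : Type} (X Y Z : Set A) (bar : A → A) (v w : A) (I J : Set A) : Set A :=
  I ∪ bar '' (X \ I) ∪ J ∪ bar '' (Y \ J) ∪ Z ∪ bar '' Z ∪ {v, w}

def Omod {A : Type} (X : Set A) (bar : A → A) (I : Set A) : Set A := I ∪ bar '' (X \ I)

def Nmod {A : Type} (X Y Z : Set A) (bar : A → A) (v : A) (I J K : Set A) : Set A :=
  I ∪ bar '' (X \ I) ∪ J ∪ bar '' (Y \ J) ∪ K ∪ bar '' (Z \ K) ∪ {v}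


namespace PhiRedAux

variable {A : Type}

theorem reduct_union (P Q : Program A) (M : Set A) :
    reduct (P ∪ Q) M = reduct P M ∪ reduct Q M := by
  ext r'
  simp only [reduct, Set.mem_setOf_eq, Set.mem_union]
  constructor
  · rintro ⟨r, hr | hr, h⟩
    · exact Or.inl ⟨r, hr, h⟩
    · exact Or.inr ⟨r, hr, h⟩
  · rintro (⟨r, hr, h⟩ | ⟨r, hr, h⟩)
    · exact ⟨r, Or.inl hr, h⟩
    · exact ⟨r, Or.inr hr, h⟩

theorem reduct_facts (F M : Set A) : reduct (factsOf F) M = factsOf F := by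
  ext r'
  simp only [reduct, factsOf, Set.mem_setOf_eq]
  constructor
  · rintro ⟨r, ⟨a, ha, rfl⟩, _, rfl⟩
    exact ⟨a, ha, rfl⟩
  · rintro ⟨a, ha, rfl⟩
    exact ⟨⟨{a}, ∅, ∅⟩, ⟨a, ha, rfl⟩, Set.empty_inter M, rfl⟩

theorem isModel_union {P Q : Program A} {M : Set A} :
    isModel (P ∪ Q) M ↔ isModel P M ∧ isModel Q M := by
  constructor
  · exact fun h => ⟨fun r hr => h r (Or.inl hr), fun r hr => h r (Or.inr hr)⟩
  · rintro ⟨h1, h2⟩ r (hr | hr)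
    exacts [h1 r hr, h2 r hr]

theorem isModel_facts {F M : Set A} : isModel (factsOf F) M ↔ F ⊆ M := by
  constructor
  · intro h a ha
    have := h ⟨{a}, ∅, ∅⟩ ⟨a, ha, rfl⟩ (by simp [satRule]) (Set.empty_inter M)
    simpa using this
  · rintro h r ⟨a, ha, rfl⟩ _ _
    exact ⟨a, rfl, h ha⟩

theorem isModel_reduct_self {P : Program A} {M : Set A} :
    isModel (reduct P M) M ↔ isModel P M := by
  constructor
  · intro h r hr hpos hneg
    exact h ⟨r.head, r.pos, ∅⟩ ⟨r, hr, hneg, rfl⟩ hpos (Set.empty_inter M)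
  · rintro h r' ⟨r, hr, hneg, rfl⟩ hpos _
    exact h r hr hpos hneg

theorem Mmod'_eq_Mmod (X Y Z : Set A) (bar : A → A) (a b : A) (I J : Set A) :
    Mmod' X Y Z bar a b I J = Mmod X Y Z bar a b I J := rfl

theorem Omod_subset_Mmod {X Y Z I J : Set A} {bar : A → A} {a b : A} :
    Omod X bar I ⊆ Mmod X Y Z bar a b I J := fun x hx => by
  simp only [Omod, Set.mem_union] at hx
  simp only [Mmod, Set.mem_union]
  tauto

theorem Omod_subset_Nmod {X Y Z I J K : Set A} {bar : A → A} {a : A} :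
    Omod X bar I ⊆ Nmod X Y Z bar a I J K := fun x hx => by
  simp only [Omod, Set.mem_union] at hx
  simp only [Nmod, Set.mem_union]
  tauto

theorem Nmod_subset_Mmod {X Y Z I J K : Set A} {bar : A → A} {a b : A} (hK : K ⊆ Z) :
    Nmod X Y Z bar a I J K ⊆ Mmod X Y Z bar a b I J := fun x hx => by
  simp only [Nmod, Set.mem_union, Set.mem_singleton_iff] at hx
  simp only [Mmod, Set.mem_union, Set.mem_insert_iff, Set.mem_singleton_iff]
  have h1 : x ∈ K → x ∈ Z := fun h => hK h
  have h2 : x ∈ bar '' (Z \ K) → x ∈ bar '' Z := fun h => Set.image_mono Set.diff_subset h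
  tauto

theorem Omod_subset_Uall {X Y Z I : Set A} {bar : A → A} {a b c : A} (hI : I ⊆ X) :
    Omod X bar I ⊆ Uall X Y Z bar a b c := fun x hx => by
  simp only [Omod, Set.mem_union] at hx
  simp only [Uall, Set.mem_union]
  have h1 : x ∈ I → x ∈ X := fun h => hI h
  have h2 : x ∈ bar '' (X \ I) → x ∈ bar '' X := fun h => Set.image_mono Set.diff_subset h
  tauto

theorem fresh_not_mem_Omod {X Y Z I : Set A} {bar : A → A} {c : A} (hI : I ⊆ X)
    (hc : c ∉ X ∪ Y ∪ Z ∪ bar '' (X ∪ Y ∪ Z)) : c ∉ Omod X bar I := by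
  simp only [Set.mem_union, not_or] at hc
  intro h
  rcases h with h | h
  · exact hc.1.1.1 (hI h)
  · exact hc.2 (Set.image_mono (fun x hx => Or.inl (Or.inl hx.1)) h)

theorem fresh_not_mem_Nmod {X Y Z I J K : Set A} {bar : A → A} {a c : A}
    (hI : I ⊆ X) (hJ : J ⊆ Y) (hK : K ⊆ Z)
    (hc : c ∉ X ∪ Y ∪ Z ∪ bar '' (X ∪ Y ∪ Z)) (hca : c ≠ a) :
    c ∉ Nmod X Y Z bar a I J K := by
  simp only [Set.mem_union, not_or] at hc
  intro h
  simp only [Nmod, Set.mem_union, Set.mem_singleton_iff] at h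
  rcases h with ((((((h|h)|h)|h)|h)|h)|h)
  · exact hc.1.1.1 (hI h)
  · exact hc.2 (Set.image_mono (fun x hx => Or.inl (Or.inl hx.1)) h)
  · exact hc.1.1.2 (hJ h)
  · exact hc.2 (Set.image_mono (fun x hx => Or.inl (Or.inr hx.1)) h)
  · exact hc.1.2 (hK h)
  · exact hc.2 (Set.image_mono (fun x hx => Or.inr hx.1) h)
  · exact hca h

theorem mem_Mmod_pt1 {X Y Z I J : Set A} {bar : A → A} {a b : A} :
    a ∈ Mmod X Y Z bar a b I J := Set.mem_union_right _ (Set.mem_insert a {b})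

theorem mem_Mmod_pt2 {X Y Z I J : Set A} {bar : A → A} {a b : A} :
    b ∈ Mmod X Y Z bar a b I J :=
  Set.mem_union_right _ (Set.mem_insert_of_mem a rfl)

theorem mem_Uall_u {X Y Z : Set A} {bar : A → A} {a b c : A} :
    a ∈ Uall X Y Z bar a b c := Set.mem_union_right _ (Set.mem_insert a {b, c})

theorem extract_eq {X Y Z : Set A} {bar : A → A} {a b : A}
    (hXY : Disjoint X Y) (hXZ : Disjoint X Z)
    (hbarinj : Function.Injective bar)
    (hbarfresh : Disjoint (bar '' (X ∪ Y ∪ Z)) (X ∪ Y ∪ Z))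
    (hafresh : a ∉ X ∪ Y ∪ Z ∪ bar '' (X ∪ Y ∪ Z))
    (hbfresh : b ∉ X ∪ Y ∪ Z ∪ bar '' (X ∪ Y ∪ Z))
    {I I' J' : Set A} (hI : I ⊆ X) (hI' : I' ⊆ X) (hJ' : J' ⊆ Y)
    (hsub : Omod X bar I ⊆ Mmod X Y Z bar a b I' J') : I' = I := by
  simp only [Set.mem_union, not_or] at hafresh hbfresh
  have hdisj := Set.disjoint_left.mp hbarfresh
  apply Set.Subset.antisymm
  · -- I' ⊆ I
    intro x hx
    by_contra hxI
    have hxX : x ∈ X := hI' hx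
    have hmem : bar x ∈ Mmod X Y Z bar a b I' J' :=
      hsub (Or.inr ⟨x, ⟨hxX, hxI⟩, rfl⟩)
    have hbimg : bar x ∈ bar '' (X ∪ Y ∪ Z) := ⟨x, Or.inl (Or.inl hxX), rfl⟩
    simp only [Mmod, Set.mem_union, Set.mem_insert_iff, Set.mem_singleton_iff] at hmem
    rcases hmem with ((((((h|h)|h)|h)|h)|h)|(h|h))
    · exact hdisj hbimg (Or.inl (Or.inl (hI' h)))
    · obtain ⟨y, hy, hxy⟩ := h
      exact hy.2 (hbarinj hxy ▸ hx)
    · exact hdisj hbimg (Or.inl (Or.inr (hJ' h)))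
    · obtain ⟨y, hy, hxy⟩ := h
      exact Set.disjoint_left.mp hXY hxX (hbarinj hxy ▸ hy.1)
    · exact hdisj hbimg (Or.inr h)
    · obtain ⟨y, hy, hxy⟩ := h
      exact Set.disjoint_left.mp hXZ hxX (hbarinj hxy ▸ hy)
    · exact hafresh.2 (h ▸ hbimg)
    · exact hbfresh.2 (h ▸ hbimg)
  · -- I ⊆ I'
    intro x hx
    have hxX : x ∈ X := hI hx
    have hmem : x ∈ Mmod X Y Z bar a b I' J' := hsub (Or.inl hx)
    simp only [Mmod, Set.mem_union, Set.mem_insert_iff, Set.mem_singleton_iff] at hmem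
    rcases hmem with ((((((h|h)|h)|h)|h)|h)|(h|h))
    · exact h
    · exact (hdisj (Set.image_mono (fun y hy => Or.inl (Or.inl hy.1)) h) (Or.inl (Or.inl hxX))).elim
    · exact (Set.disjoint_left.mp hXY hxX (hJ' h)).elim
    · exact (hdisj (Set.image_mono (fun y hy => Or.inl (Or.inr hy.1)) h) (Or.inl (Or.inl hxX))).elim
    · exact (Set.disjoint_left.mp hXZ hxX h).elim
    · exact (hdisj (Set.image_mono (fun y (hy : y ∈ Z) => Or.inr hy) h) (Or.inl (Or.inl hxX))).elim
    · exact (hafresh.1.1.1 (h ▸ hxX)).elim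
    · exact (hbfresh.1.1.1 (h ▸ hxX)).elim
end PhiRedAux

/-- If Φ = ∀X∃Y∀Z φ is false, then any Φ-reduction P is not super-coherent:
there is I ⊆ X such that P ∪ F_I has no answer set, where
F_I = I ∪ {x̄ : x ∈ X \ I}. -/
theorem phiReduction_false_not_superCoherent {A : Type}
    (X Y Z : Set A) (bar : A → A) (u v w : A) (phi : Set A → Prop) (P : Program A)
    (hXne : X.Nonempty) (hYne : Y.Nonempty) (hZne : Z.Nonempty)
    (hXY : Disjoint X Y) (hXZ : Disjoint X Z) (hYZ : Disjoint Y Z)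
    (hbarinj : Function.Injective bar)
    (hbarfresh : Disjoint (bar '' (X ∪ Y ∪ Z)) (X ∪ Y ∪ Z))
    (huv : u ≠ v) (huw : u ≠ w) (hvw : v ≠ w)
    (hufresh : u ∉ X ∪ Y ∪ Z ∪ bar '' (X ∪ Y ∪ Z))
    (hvfresh : v ∉ X ∪ Y ∪ Z ∪ bar '' (X ∪ Y ∪ Z))
    (hwfresh : w ∉ X ∪ Y ∪ Z ∪ bar '' (X ∪ Y ∪ Z))
    (hatoms : atomsOf P = Uall X Y Z bar u v w)
    (hmodels : ∀ M ⊆ Uall X Y Z bar u v w, (isModel P M ↔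
       (M = Uall X Y Z bar u v w ∨ ∃ I, I ⊆ X ∧ ∃ J, J ⊆ Y ∧
         (M = Mmod X Y Z bar u v I J ∨ M = Mmod' X Y Z bar v w I J))))
    (hredM : ∀ I, I ⊆ X → ∀ J, J ⊆ Y → ∀ N ⊆ Mmod X Y Z bar u v I J,
       (isModel (reduct P (Mmod X Y Z bar u v I J)) N ↔
         (N = Mmod X Y Z bar u v I J ∨ N = Omod X bar I)))
    (hredM' : ∀ I, I ⊆ X → ∀ J, J ⊆ Y → ∀ N ⊆ Mmod' X Y Z bar v w I J,
       (isModel (reduct P (Mmod' X Y Z bar v w I J)) N ↔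
         (N = Mmod' X Y Z bar v w I J ∨
           ∃ K, K ⊆ Z ∧ ¬ phi (I ∪ J ∪ K) ∧ N = Nmod X Y Z bar v I J K)))
    (hredU : ∀ N ⊆ Uall X Y Z bar u v w,
       (isModel (reduct P (Uall X Y Z bar u v w)) N ↔
         (N = Uall X Y Z bar u v w ∨ ∃ I, I ⊆ X ∧ ∃ J, J ⊆ Y ∧
           (N = Mmod X Y Z bar u v I J ∨ N = Mmod' X Y Z bar v w I J ∨ N = Omod X bar I ∨
             ∃ K, K ⊆ Z ∧ ¬ phi (I ∪ J ∪ K) ∧ N = Nmod X Y Z bar v I J K))))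
    (hfalse : ∃ I, I ⊆ X ∧ ∀ J, J ⊆ Y → ∃ K, K ⊆ Z ∧ ¬ phi (I ∪ J ∪ K)) :
    (∃ I, I ⊆ X ∧ ∀ M, ¬ isAnswerSet (P ∪ factsOf (I ∪ bar '' (X \ I))) M) ∧
      ¬ superCoherent P := by
  classical
  obtain ⟨I, hI, hfa⟩ := hfalse
  have key : ∀ M, ¬ isAnswerSet (P ∪ factsOf (I ∪ bar '' (X \ I))) M := by
    intro M hAS
    set F : Set A := I ∪ bar '' (X \ I) with hFdef
    have hFO : F = Omod X bar I := rfl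
    obtain ⟨hmod, hmin⟩ := hAS
    have hredQ : reduct (P ∪ factsOf F) M = reduct P M ∪ factsOf F := by
      rw [PhiRedAux.reduct_union, PhiRedAux.reduct_facts]
    rw [hredQ] at hmod hmin
    have hFM : F ⊆ M := PhiRedAux.isModel_facts.mp (PhiRedAux.isModel_union.mp hmod).2
    have hPM : isModel P M :=
      PhiRedAux.isModel_reduct_self.mp (PhiRedAux.isModel_union.mp hmod).1
    have hFU : F ⊆ Uall X Y Z bar u v w := PhiRedAux.Omod_subset_Uall hI
    have hheads : ∀ r ∈ (P ∪ factsOf F),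
        r.head ⊆ Uall X Y Z bar u v w := by
      rintro r (hr | ⟨a, ha, rfl⟩)
      · have hsub : r.head ∪ r.pos ∪ r.neg ⊆ atomsOf P := fun x hx =>
          Set.mem_biUnion hr hx
        rw [hatoms] at hsub
        exact fun x hx => hsub (Or.inl (Or.inl hx))
      · rintro x rfl
        exact hFU ha
    have hMU : M ⊆ Uall X Y Z bar u v w := by
      have hNmodel : isModel (reduct P M ∪ factsOf F) (M ∩ Uall X Y Z bar u v w) := by
        rintro r' (⟨r, hr, hneg, rfl⟩ | ⟨a, ha, rfl⟩)
        · intro hpos _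
          have hp : r.pos ⊆ M := fun x hx => (hpos hx).1
          obtain ⟨x, hxh, hxM⟩ :=
            hmod ⟨r.head, r.pos, ∅⟩ (Or.inl ⟨r, hr, hneg, rfl⟩) hp (Set.empty_inter M)
          exact ⟨x, hxh, hxM, hheads r (Or.inl hr) hxh⟩
        · intro _ _
          exact ⟨a, rfl, hFM ha, hFU ha⟩
      have := hmin _ Set.inter_subset_left hNmodel
      exact Set.inter_eq_left.mp this
    have hcontr : ∀ N, isModel (reduct P M) N → F ⊆ N → N ⊆ M → N = M := fun N h1 h2 h3 =>
      hmin N h3 (PhiRedAux.isModel_union.mpr ⟨h1, PhiRedAux.isModel_facts.mpr h2⟩)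
    rcases (hmodels M hMU).mp hPM with hMeq | ⟨I', hI', J', hJ', hMeq | hMeq⟩
    · subst hMeq
      have hNmod : isModel (reduct P (Uall X Y Z bar u v w)) (Omod X bar I) :=
        (hredU _ (PhiRedAux.Omod_subset_Uall hI)).mpr
          (Or.inr ⟨I, hI, ∅, Set.empty_subset Y, Or.inr (Or.inr (Or.inl rfl))⟩)
      have hNeq := hcontr _ hNmod (Set.Subset.refl _) (PhiRedAux.Omod_subset_Uall hI)
      have : u ∈ Omod X bar I := by rw [hNeq]; exact PhiRedAux.mem_Uall_u
      exact PhiRedAux.fresh_not_mem_Omod hI hufresh this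
    · subst hMeq
      have hIeq : I' = I := PhiRedAux.extract_eq hXY hXZ hbarinj hbarfresh hufresh hvfresh
        hI hI' hJ' hFM
      subst hIeq
      have hNmod : isModel (reduct P (Mmod X Y Z bar u v I' J')) (Omod X bar I') :=
        (hredM I' hI J' hJ' _ PhiRedAux.Omod_subset_Mmod).mpr (Or.inr rfl)
      have hNeq := hcontr _ hNmod (Set.Subset.refl _) PhiRedAux.Omod_subset_Mmod
      have : u ∈ Omod X bar I' := by rw [hNeq]; exact PhiRedAux.mem_Mmod_pt1
      exact PhiRedAux.fresh_not_mem_Omod hI hufresh this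
    · subst hMeq
      have hIeq : I' = I := PhiRedAux.extract_eq hXY hXZ hbarinj hbarfresh hvfresh hwfresh
        hI hI' hJ' hFM
      subst hIeq
      obtain ⟨K, hK, hphi⟩ := hfa J' hJ'
      have hNmod : isModel (reduct P (Mmod' X Y Z bar v w I' J')) (Nmod X Y Z bar v I' J' K) :=
        (hredM' I' hI J' hJ' _ (PhiRedAux.Nmod_subset_Mmod hK)).mpr
          (Or.inr ⟨K, hK, hphi, rfl⟩)
      have hNeq := hcontr _ hNmod PhiRedAux.Omod_subset_Nmod (PhiRedAux.Nmod_subset_Mmod hK)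
      have : w ∈ Nmod X Y Z bar v I' J' K := by rw [hNeq]; exact PhiRedAux.mem_Mmod_pt2
      exact PhiRedAux.fresh_not_mem_Nmod hI hJ' hK hwfresh (Ne.symm hvw) this
  refine ⟨⟨I, hI, key⟩, fun hsc => ?_⟩
  obtain ⟨M, hM⟩ := hsc (I ∪ bar '' (X \ I))
  exact key M hM
end

section
/- The program P_Φ constructed from a QBF Φ = ∀X∃Y∀Z φ (φ in DNF, each disjunct containing a variable from each of X, Y, Z) has as classical models exactly: U = X ∪ Y ∪ Z ∪ X̄ ∪ Ȳ ∪ Z̄ ∪ {u,v,w}, and for each I ⊆ X and J ⊆ Y, the sets M[I,J] = I ∪ (X\I)‾ ∪ J ∪ (Y\J)‾ ∪ Z ∪ Z̄ ∪ {u,v} and M'[I,J] = I ∪ (X\I)‾ ∪ J ∪ (Y\J)‾ ∪ Z ∪ Z̄ ∪ {v,w}. -/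
/-- The program P_Φ for a QBF ∀X∃Y∀Z φ, where φ is a DNF given by the set D of
disjuncts, each disjunct d being a pair (positive variables, negated variables). -/
def PPhi {A : Type} (X Y Z : Set A) (bar : A → A) (u v w : A)
    (D : Set (Set A × Set A)) : Program A :=
  {r | ∃ x ∈ X, r = ⟨{x, bar x}, ∅, ∅⟩ ∨ r = ⟨{u}, {x, bar x}, ∅⟩ ∨
       r = ⟨{w}, {x, bar x}, ∅⟩ ∨ r = ⟨{x}, {u, w}, ∅⟩ ∨ r = ⟨{bar x}, {u, w}, ∅⟩} ∪
  {r | ∃ y ∈ Y, r = ⟨{y, bar y}, {v}, ∅⟩ ∨ r = ⟨{u}, {y, bar y}, ∅⟩ ∨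
       r = ⟨{w}, {y, bar y}, ∅⟩ ∨ r = ⟨{y}, {u, w}, ∅⟩ ∨ r = ⟨{bar y}, {u, w}, ∅⟩ ∨
       r = ⟨{v}, {y}, ∅⟩ ∨ r = ⟨{v}, {bar y}, ∅⟩} ∪
  {r | ∃ z ∈ Z, r = ⟨{z, bar z}, {v}, ∅⟩ ∨ r = ⟨{u}, {z}, {w}⟩ ∨ r = ⟨{u}, {bar z}, {w}⟩ ∨
       r = ⟨{v}, {z}, ∅⟩ ∨ r = ⟨{v}, {bar z}, ∅⟩ ∨ r = ⟨{z}, {w}, ∅⟩ ∨ r = ⟨{bar z}, {w}, ∅⟩ ∨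
       r = ⟨{z}, {u}, ∅⟩ ∨ r = ⟨{bar z}, {u}, ∅⟩ ∨ r = ⟨{w, u}, {z, bar z}, ∅⟩} ∪
  {r | ∃ d ∈ D, r = ⟨{w, u}, d.1 ∪ bar '' d.2, ∅⟩} ∪
  {⟨{v}, {w}, ∅⟩, ⟨{v}, {u}, ∅⟩, ⟨{v}, ∅, {u}⟩}

/-! The rules `v ← u` and `v ← not u` force `v`, so every `z ∈ Z` contributes `z` or `z̄`, and
`u ← z, not w` then forces `u` or `w`; either of these puts all of `Z ∪ Z̄` into the model via
`z ← u`, `z ← w`, and satisfies every disjunct rule `w ∨ u ← …`. For an atom of `X ∪ Y` the rules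
say that at least one of its literals is true, and both are true exactly when `u` and `w` are.
Hence a model containing `u` and `w` is all of `U`, and a model containing exactly one of them
chooses one literal for each atom of `X ∪ Y`: it is `M[I,J]` or `M'[I,J]`. -/

lemma satRule_iff {A : Type} (M : Set A) (r : Rule A) :
    satRule M r ↔ (r.pos ⊆ M → Disjoint r.neg M → ∃ a ∈ r.head, a ∈ M) := by
  rw [satRule, Set.disjoint_iff_inter_eq_empty]
  rfl

lemma isModel_union {A : Type} (P Q : Program A) (M : Set A) :
    isModel (P ∪ Q) M ↔ isModel P M ∧ isModel Q M := by
  simp only [isModel, Set.mem_union, or_imp, forall_and]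

section

variable {A : Type} {X Y Z : Set A} {bar : A → A} {u v w : A} {M : Set A}

def ModelCond (X Y Z : Set A) (bar : A → A) (u v w : A) (M : Set A) : Prop :=
  v ∈ M ∧ (u ∈ M ∨ w ∈ M) ∧ (∀ z ∈ Z, z ∈ M ∧ bar z ∈ M) ∧
    ∀ a ∈ X ∪ Y, (a ∈ M ∨ bar a ∈ M) ∧ (a ∈ M ∧ bar a ∈ M ↔ u ∈ M ∧ w ∈ M)

theorem isModel_PPhi_iff (D : Set (Set A × Set A)) (hZ : Z.Nonempty) :
    isModel (PPhi X Y Z bar u v w D) M ↔ ModelCond X Y Z bar u v w M := by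
  simp only [PPhi, isModel_union]
  simp only [isModel, Set.mem_ofPred_eq, Set.mem_insert_iff, Set.mem_singleton_iff,
    forall_exists_index, and_imp, @forall_comm (Rule A), forall_eq_or_imp, forall_eq, satRule_iff,
    Set.insert_subset_iff, Set.singleton_subset_iff, Set.disjoint_singleton_left, exists_eq_or_imp,
    exists_eq_left, Set.empty_subset, Set.empty_disjoint, true_imp_iff]
  constructor
  · rintro ⟨⟨⟨⟨hX, hY⟩, hZ'⟩, -⟩, -, hvu, hvnu⟩
    have hv : v ∈ M := by
      by_cases hu : u ∈ M
      exacts [hvu hu, hvnu hu]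
    have huw : u ∈ M ∨ w ∈ M := by
      obtain ⟨z, hz⟩ := hZ
      obtain ⟨hzv, hzu, hzbu, -⟩ := hZ' z hz
      by_contra! h
      rcases hzv hv with hz | hz
      exacts [h.1 (hzu hz h.2), h.1 (hzbu hz h.2)]
    refine ⟨hv, huw, fun z hz => by grind, ?_⟩
    rintro a (ha | ha) <;> grind
  · rintro ⟨hv, huw, hZsat, hXY⟩
    refine ⟨⟨⟨⟨fun x hx => ?_, fun y hy => ?_⟩, fun z hz => ?_⟩, fun _ _ _ => huw.symm⟩,
      fun _ => hv, fun _ => hv, fun _ => hv⟩ <;> grind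

lemma Mmod_subset (p q : A) {I J : Set A} (hI : I ⊆ X) (hJ : J ⊆ Y) :
    Mmod X Y Z bar p q I J ⊆ X ∪ Y ∪ Z ∪ bar '' (X ∪ Y ∪ Z) ∪ {p, q} := by
  intro a
  simp only [Mmod, Set.mem_union, Set.mem_image, Set.mem_sdiff, Set.mem_insert_iff,
    Set.mem_singleton_iff]
  grind

lemma notMem_Mmod {p q t : A} {I J : Set A} (hI : I ⊆ X) (hJ : J ⊆ Y)
    (ht : t ∉ X ∪ Y ∪ Z ∪ bar '' (X ∪ Y ∪ Z)) (htp : t ≠ p) (htq : t ≠ q) :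
    t ∉ Mmod X Y Z bar p q I J := fun h => by
  simpa [ht, htp, htq] using Mmod_subset p q hI hJ h

lemma mem_Mmod_iff_of_mem {p q a : A} {I J : Set A}
    (hbarfresh : Disjoint (bar '' (X ∪ Y ∪ Z)) (X ∪ Y ∪ Z))
    (hp : p ∉ X ∪ Y ∪ Z ∪ bar '' (X ∪ Y ∪ Z)) (hq : q ∉ X ∪ Y ∪ Z ∪ bar '' (X ∪ Y ∪ Z))
    (ha : a ∈ X ∪ Y ∪ Z) :
    a ∈ Mmod X Y Z bar p q I J ↔ a ∈ I ∨ a ∈ J ∨ a ∈ Z := by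
  have hbar : ∀ T ⊆ X ∪ Y ∪ Z, a ∉ bar '' T := fun T hT h =>
    Set.disjoint_right.mp hbarfresh ha (Set.image_mono hT h)
  have hap : a ≠ p := by rintro rfl; exact hp (.inl ha)
  have haq : a ≠ q := by rintro rfl; exact hq (.inl ha)
  simp only [Mmod, Set.mem_union, Set.mem_insert_iff, Set.mem_singleton_iff, hap, haq,
    hbar _ (by grind : X \ I ⊆ X ∪ Y ∪ Z), hbar _ (by grind : Y \ J ⊆ X ∪ Y ∪ Z),
    hbar _ (by grind : Z ⊆ X ∪ Y ∪ Z)]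
  tauto

lemma bar_mem_Mmod_iff {p q a : A} {I J : Set A} (hI : I ⊆ X) (hJ : J ⊆ Y)
    (hbarinj : Function.Injective bar)
    (hbarfresh : Disjoint (bar '' (X ∪ Y ∪ Z)) (X ∪ Y ∪ Z))
    (hp : p ∉ X ∪ Y ∪ Z ∪ bar '' (X ∪ Y ∪ Z)) (hq : q ∉ X ∪ Y ∪ Z ∪ bar '' (X ∪ Y ∪ Z))
    (ha : a ∈ X ∪ Y ∪ Z) :
    bar a ∈ Mmod X Y Z bar p q I J ↔ a ∈ X \ I ∨ a ∈ Y \ J ∨ a ∈ Z := by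
  have hbar : ∀ T ⊆ X ∪ Y ∪ Z, bar a ∉ T := fun T hT h =>
    Set.disjoint_left.mp hbarfresh ⟨a, ha, rfl⟩ (hT h)
  have hap : bar a ≠ p := by rintro rfl; exact hp (.inr ⟨a, ha, rfl⟩)
  have haq : bar a ≠ q := by rintro rfl; exact hq (.inr ⟨a, ha, rfl⟩)
  simp only [Mmod, Set.mem_union, Set.mem_insert_iff, Set.mem_singleton_iff, hap, haq,
    hbarinj.mem_set_image, hbar _ (hI.trans (by grind)), hbar _ (hJ.trans (by grind)),
    hbar _ (by grind : Z ⊆ X ∪ Y ∪ Z)]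
  tauto

lemma mem_Mmod_iff_bar_notMem {p q a : A} {I J : Set A} (hI : I ⊆ X) (hJ : J ⊆ Y)
    (hXY : Disjoint X Y) (hXZ : Disjoint X Z) (hYZ : Disjoint Y Z)
    (hbarinj : Function.Injective bar)
    (hbarfresh : Disjoint (bar '' (X ∪ Y ∪ Z)) (X ∪ Y ∪ Z))
    (hp : p ∉ X ∪ Y ∪ Z ∪ bar '' (X ∪ Y ∪ Z)) (hq : q ∉ X ∪ Y ∪ Z ∪ bar '' (X ∪ Y ∪ Z))
    (ha : a ∈ X ∪ Y) :
    a ∈ Mmod X Y Z bar p q I J ↔ bar a ∉ Mmod X Y Z bar p q I J := by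
  have ha' : a ∈ X ∪ Y ∪ Z := .inl ha
  rw [mem_Mmod_iff_of_mem hbarfresh hp hq ha', bar_mem_Mmod_iff hI hJ hbarinj hbarfresh hp hq ha']
  have := Set.disjoint_left.mp hXY
  have := Set.disjoint_left.mp hXZ
  have := Set.disjoint_left.mp hYZ
  simp only [Set.mem_sdiff]
  grind

lemma modelCond_of_literal (hv : v ∈ M) (huw : u ∈ M ∨ w ∈ M) (huw' : ¬(u ∈ M ∧ w ∈ M))
    (hZ : ∀ z ∈ Z, z ∈ M ∧ bar z ∈ M) (hXY : ∀ a ∈ X ∪ Y, a ∈ M ↔ bar a ∉ M) :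
    ModelCond X Y Z bar u v w M :=
  ⟨hv, huw, hZ, fun a ha => by have := hXY a ha; tauto⟩

lemma modelCond_Uall : ModelCond X Y Z bar u v w (Uall X Y Z bar u v w) := by
  have hmem : ∀ a ∈ X ∪ Y ∪ Z, a ∈ Uall X Y Z bar u v w ∧ bar a ∈ Uall X Y Z bar u v w := by
    intro a ha
    simp only [Uall, Set.mem_union, Set.mem_image, Set.mem_insert_iff, Set.mem_singleton_iff]
    grind
  have hu : u ∈ Uall X Y Z bar u v w := by simp [Uall]
  have hw : w ∈ Uall X Y Z bar u v w := by simp [Uall]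
  exact ⟨by simp [Uall], .inl hu, fun z hz => hmem z (.inr hz),
    fun a ha => ⟨.inl (hmem a (.inl ha)).1, iff_of_true (hmem a (.inl ha)) ⟨hu, hw⟩⟩⟩

lemma modelCond_Mmod {I J : Set A} (hI : I ⊆ X) (hJ : J ⊆ Y)
    (hXY : Disjoint X Y) (hXZ : Disjoint X Z) (hYZ : Disjoint Y Z)
    (hbarinj : Function.Injective bar)
    (hbarfresh : Disjoint (bar '' (X ∪ Y ∪ Z)) (X ∪ Y ∪ Z))
    (huw : u ≠ w) (hvw : v ≠ w)
    (hufresh : u ∉ X ∪ Y ∪ Z ∪ bar '' (X ∪ Y ∪ Z))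
    (hvfresh : v ∉ X ∪ Y ∪ Z ∪ bar '' (X ∪ Y ∪ Z))
    (hwfresh : w ∉ X ∪ Y ∪ Z ∪ bar '' (X ∪ Y ∪ Z)) :
    ModelCond X Y Z bar u v w (Mmod X Y Z bar u v I J) :=
  modelCond_of_literal (by simp [Mmod]) (by simp [Mmod])
    (fun h => notMem_Mmod hI hJ hwfresh huw.symm hvw.symm h.2)
    (fun z hz => by simp [Mmod, hz, Set.mem_image_of_mem bar hz])
    (fun _ => mem_Mmod_iff_bar_notMem hI hJ hXY hXZ hYZ hbarinj hbarfresh hufresh hvfresh)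

lemma modelCond_Mmod' {I J : Set A} (hI : I ⊆ X) (hJ : J ⊆ Y)
    (hXY : Disjoint X Y) (hXZ : Disjoint X Z) (hYZ : Disjoint Y Z)
    (hbarinj : Function.Injective bar)
    (hbarfresh : Disjoint (bar '' (X ∪ Y ∪ Z)) (X ∪ Y ∪ Z))
    (huv : u ≠ v) (huw : u ≠ w)
    (hufresh : u ∉ X ∪ Y ∪ Z ∪ bar '' (X ∪ Y ∪ Z))
    (hvfresh : v ∉ X ∪ Y ∪ Z ∪ bar '' (X ∪ Y ∪ Z))
    (hwfresh : w ∉ X ∪ Y ∪ Z ∪ bar '' (X ∪ Y ∪ Z)) :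
    ModelCond X Y Z bar u v w (Mmod' X Y Z bar v w I J) :=
  modelCond_of_literal (by simp [Mmod']) (by simp [Mmod'])
    (fun h => notMem_Mmod hI hJ hufresh huv huw h.1)
    (fun z hz => by simp [Mmod', hz, Set.mem_image_of_mem bar hz])
    (fun _ => mem_Mmod_iff_bar_notMem hI hJ hXY hXZ hYZ hbarinj hbarfresh hvfresh hwfresh)

lemma eq_Uall_of_forall_mem (hM : M ⊆ Uall X Y Z bar u v w) (hu : u ∈ M) (hv : v ∈ M)
    (hw : w ∈ M) (hXY : ∀ a ∈ X ∪ Y, a ∈ M ∧ bar a ∈ M) (hZ : ∀ z ∈ Z, z ∈ M ∧ bar z ∈ M) :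
    M = Uall X Y Z bar u v w := by
  refine hM.antisymm fun a ha => ?_
  simp only [Uall, Set.mem_union, Set.mem_image, Set.mem_insert_iff, Set.mem_singleton_iff] at ha
  grind

lemma eq_Mmod_of_literal {p q : A} (hM : M ⊆ Uall X Y Z bar u v w) (hp : p ∈ M) (hq : q ∈ M)
    (hpq : ∀ t ∈ M, t = u ∨ t = v ∨ t = w → t = p ∨ t = q)
    (hXY : ∀ a ∈ X ∪ Y, a ∈ M ↔ bar a ∉ M) (hZ : ∀ z ∈ Z, z ∈ M ∧ bar z ∈ M) :
    M = Mmod X Y Z bar p q (M ∩ X) (M ∩ Y) := by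
  ext a
  have := @hM a
  simp only [Uall, Mmod, Set.mem_union, Set.mem_image, Set.mem_sdiff, Set.mem_inter_iff,
    Set.mem_insert_iff, Set.mem_singleton_iff] at this ⊢
  grind

theorem eq_Uall_or_Mmod_of_modelCond (hM : M ⊆ Uall X Y Z bar u v w)
    (h : ModelCond X Y Z bar u v w M) :
    M = Uall X Y Z bar u v w ∨ ∃ I, I ⊆ X ∧ ∃ J, J ⊆ Y ∧
      (M = Mmod X Y Z bar u v I J ∨ M = Mmod' X Y Z bar v w I J) := by
  obtain ⟨hv, huw, hZ, hXY⟩ := h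
  have hlit : ¬(u ∈ M ∧ w ∈ M) → ∀ a ∈ X ∪ Y, a ∈ M ↔ bar a ∉ M := fun huw' a ha => by
    have := hXY a ha
    tauto
  by_cases hu : u ∈ M <;> by_cases hw : w ∈ M
  · exact .inl (eq_Uall_of_forall_mem hM hu hv hw (fun a ha => (hXY a ha).2.mpr ⟨hu, hw⟩) hZ)
  · refine .inr ⟨M ∩ X, Set.inter_subset_right, M ∩ Y, Set.inter_subset_right, .inl ?_⟩
    exact eq_Mmod_of_literal hM hu hv (by grind) (hlit (by tauto)) hZ
  · refine .inr ⟨M ∩ X, Set.inter_subset_right, M ∩ Y, Set.inter_subset_right, .inr ?_⟩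
    exact eq_Mmod_of_literal hM hv hw (by grind) (hlit (by tauto)) hZ
  · exact (huw.elim hu hw).elim

end

theorem PPhi_models_general {A : Type}
    (X Y Z : Set A) (bar : A → A) (u v w : A) (D : Set (Set A × Set A))
    (hZne : Z.Nonempty)
    (hXY : Disjoint X Y) (hXZ : Disjoint X Z) (hYZ : Disjoint Y Z)
    (hbarinj : Function.Injective bar)
    (hbarfresh : Disjoint (bar '' (X ∪ Y ∪ Z)) (X ∪ Y ∪ Z))
    (huv : u ≠ v) (huw : u ≠ w) (hvw : v ≠ w)
    (hufresh : u ∉ X ∪ Y ∪ Z ∪ bar '' (X ∪ Y ∪ Z))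
    (hvfresh : v ∉ X ∪ Y ∪ Z ∪ bar '' (X ∪ Y ∪ Z))
    (hwfresh : w ∉ X ∪ Y ∪ Z ∪ bar '' (X ∪ Y ∪ Z)) :
    ∀ M ⊆ Uall X Y Z bar u v w,
      (isModel (PPhi X Y Z bar u v w D) M ↔
        (M = Uall X Y Z bar u v w ∨ ∃ I, I ⊆ X ∧ ∃ J, J ⊆ Y ∧
          (M = Mmod X Y Z bar u v I J ∨ M = Mmod' X Y Z bar v w I J))) := by
  intro M hM
  rw [isModel_PPhi_iff D hZne]
  refine ⟨eq_Uall_or_Mmod_of_modelCond hM, ?_⟩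
  rintro (rfl | ⟨I, hI, J, hJ, rfl | rfl⟩)
  · exact modelCond_Uall
  · exact modelCond_Mmod hI hJ hXY hXZ hYZ hbarinj hbarfresh huw hvw hufresh hvfresh hwfresh
  · exact modelCond_Mmod' hI hJ hXY hXZ hYZ hbarinj hbarfresh huv huw hufresh hvfresh hwfresh

/-- The classical models of P_Φ are exactly U, and M[I,J], M'[I,J] for I ⊆ X, J ⊆ Y. -/
theorem PPhi_models {A : Type}
    (X Y Z : Set A) (bar : A → A) (u v w : A) (D : Set (Set A × Set A))
    (hXne : X.Nonempty) (hYne : Y.Nonempty) (hZne : Z.Nonempty)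
    (hXY : Disjoint X Y) (hXZ : Disjoint X Z) (hYZ : Disjoint Y Z)
    (hbarinj : Function.Injective bar)
    (hbarfresh : Disjoint (bar '' (X ∪ Y ∪ Z)) (X ∪ Y ∪ Z))
    (huv : u ≠ v) (huw : u ≠ w) (hvw : v ≠ w)
    (hufresh : u ∉ X ∪ Y ∪ Z ∪ bar '' (X ∪ Y ∪ Z))
    (hvfresh : v ∉ X ∪ Y ∪ Z ∪ bar '' (X ∪ Y ∪ Z))
    (hwfresh : w ∉ X ∪ Y ∪ Z ∪ bar '' (X ∪ Y ∪ Z))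
    (hDvars : ∀ d ∈ D, d.1 ∪ d.2 ⊆ X ∪ Y ∪ Z)
    (hDall : ∀ d ∈ D, ((d.1 ∪ d.2) ∩ X).Nonempty ∧ ((d.1 ∪ d.2) ∩ Y).Nonempty ∧
       ((d.1 ∪ d.2) ∩ Z).Nonempty) :
    ∀ M ⊆ Uall X Y Z bar u v w,
      (isModel (PPhi X Y Z bar u v w D) M ↔
        (M = Uall X Y Z bar u v w ∨ ∃ I, I ⊆ X ∧ ∃ J, J ⊆ Y ∧
          (M = Mmod X Y Z bar u v I J ∨ M = Mmod' X Y Z bar v w I J))) :=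
  PPhi_models_general X Y Z bar u v w D hZne hXY hXZ hYZ hbarinj hbarfresh huv huw hvw hufresh
    hvfresh hwfresh
end

section
/- For the program P_Φ of a QBF Φ = ∀X∃Y∀Z φ and any I ⊆ X, J ⊆ Y, the models of the reduct P_Φ^{M[I,J]} that are subsets of M[I,J] are exactly M[I,J] itself and O[I] = I ∪ (X\I)‾. -/
/-- The models of the reduct P_Φ^{M[I,J]} that are subsets of M[I,J] are exactly
M[I,J] itself and O[I]. -/
theorem PPhi_reduct_Mmod_models {A : Type}
    (X Y Z : Set A) (bar : A → A) (u v w : A) (D : Set (Set A × Set A))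
    (hXne : X.Nonempty) (hYne : Y.Nonempty) (hZne : Z.Nonempty)
    (hXY : Disjoint X Y) (hXZ : Disjoint X Z) (hYZ : Disjoint Y Z)
    (hbarinj : Function.Injective bar)
    (hbarfresh : Disjoint (bar '' (X ∪ Y ∪ Z)) (X ∪ Y ∪ Z))
    (huv : u ≠ v) (huw : u ≠ w) (hvw : v ≠ w)
    (hufresh : u ∉ X ∪ Y ∪ Z ∪ bar '' (X ∪ Y ∪ Z))
    (hvfresh : v ∉ X ∪ Y ∪ Z ∪ bar '' (X ∪ Y ∪ Z))
    (hwfresh : w ∉ X ∪ Y ∪ Z ∪ bar '' (X ∪ Y ∪ Z))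
    (hDvars : ∀ d ∈ D, d.1 ∪ d.2 ⊆ X ∪ Y ∪ Z)
    (hDall : ∀ d ∈ D, ((d.1 ∪ d.2) ∩ X).Nonempty ∧ ((d.1 ∪ d.2) ∩ Y).Nonempty ∧
       ((d.1 ∪ d.2) ∩ Z).Nonempty) :
    ∀ I, I ⊆ X → ∀ J, J ⊆ Y → ∀ N ⊆ Mmod X Y Z bar u v I J,
      (isModel (reduct (PPhi X Y Z bar u v w D) (Mmod X Y Z bar u v I J)) N ↔
        (N = Mmod X Y Z bar u v I J ∨ N = Omod X bar I)) := by
  intro I hI J hJ N hNsub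
  set M := Mmod X Y Z bar u v I J with hMdef
  set O := Omod X bar I with hOdef
  set P := PPhi X Y Z bar u v w D with hPdef
  -- basic freshness helpers
  have hXU : X ⊆ X ∪ Y ∪ Z := fun a ha => Or.inl (Or.inl ha)
  have hYU : Y ⊆ X ∪ Y ∪ Z := fun a ha => Or.inl (Or.inr ha)
  have hZU : Z ⊆ X ∪ Y ∪ Z := fun a ha => Or.inr ha
  have hbarU : ∀ {a}, a ∈ X ∪ Y ∪ Z → bar a ∉ X ∪ Y ∪ Z :=
    fun ha => Set.disjoint_left.mp hbarfresh ⟨_, ha, rfl⟩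
  have hbar_ne_u : ∀ {a}, a ∈ X ∪ Y ∪ Z → bar a ≠ u :=
    fun ha h => hufresh (Or.inr ⟨_, ha, h⟩)
  have hbar_ne_v : ∀ {a}, a ∈ X ∪ Y ∪ Z → bar a ≠ v :=
    fun ha h => hvfresh (Or.inr ⟨_, ha, h⟩)
  have hbar_ne_w : ∀ {a}, a ∈ X ∪ Y ∪ Z → bar a ≠ w :=
    fun ha h => hwfresh (Or.inr ⟨_, ha, h⟩)
  have hu_notU : u ∉ X ∪ Y ∪ Z := fun h => hufresh (Or.inl h)
  have hv_notU : v ∉ X ∪ Y ∪ Z := fun h => hvfresh (Or.inl h)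
  have hw_notU : w ∉ X ∪ Y ∪ Z := fun h => hwfresh (Or.inl h)
  have hMmem : ∀ {a : A}, a ∈ M ↔
      ((((((a ∈ I ∨ ∃ c, (c ∈ X ∧ c ∉ I) ∧ bar c = a) ∨ a ∈ J) ∨
        ∃ c, (c ∈ Y ∧ c ∉ J) ∧ bar c = a) ∨ a ∈ Z) ∨ ∃ c, c ∈ Z ∧ bar c = a) ∨
        a = u ∨ a = v) := by
    intro a
    simp only [hMdef, Mmod, Set.mem_union, Set.mem_image, Set.mem_diff,
      Set.mem_insert_iff, Set.mem_singleton_iff]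
  have hOmem : ∀ {a : A}, a ∈ O ↔ (a ∈ I ∨ ∃ c, (c ∈ X ∧ c ∉ I) ∧ bar c = a) := by
    intro a
    simp only [hOdef, Omod, Set.mem_union, Set.mem_image, Set.mem_diff]
  -- membership facts for M
  have hxM : ∀ {x}, x ∈ X → (x ∈ M ↔ x ∈ I) := by
    intro x hx
    rw [hMmem]
    constructor
    · rintro ((((((h | ⟨c, hc, hcx⟩) | h) | ⟨c, hc, hcx⟩) | h) | ⟨c, hc, hcx⟩) | h | h)
      · exact h
      · exact absurd (hXU hx) (hcx ▸ hbarU (hXU hc.1))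
      · exact absurd (hJ h) (Set.disjoint_left.mp hXY hx)
      · exact absurd (hXU hx) (hcx ▸ hbarU (hYU hc.1))
      · exact absurd h (Set.disjoint_left.mp hXZ hx)
      · exact absurd (hXU hx) (hcx ▸ hbarU (hZU hc))
      · exact absurd (hXU hx) (h ▸ hu_notU)
      · exact absurd (hXU hx) (h ▸ hv_notU)
    · intro h; exact Or.inl (Or.inl (Or.inl (Or.inl (Or.inl (Or.inl h)))))
  have hbxM : ∀ {x}, x ∈ X → (bar x ∈ M ↔ x ∉ I) := by
    intro x hx
    rw [hMmem]
    constructor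
    · rintro ((((((h | ⟨c, hc, hcx⟩) | h) | ⟨c, hc, hcx⟩) | h) | ⟨c, hc, hcx⟩) | h | h)
      · exact absurd (hXU (hI h)) (hbarU (hXU hx))
      · cases hbarinj hcx; exact hc.2
      · exact absurd (hYU (hJ h)) (hbarU (hXU hx))
      · cases hbarinj hcx; exact absurd hc.1 (Set.disjoint_left.mp hXY hx)
      · exact absurd (hZU h) (hbarU (hXU hx))
      · cases hbarinj hcx; exact absurd hc (Set.disjoint_left.mp hXZ hx)
      · exact absurd h (hbar_ne_u (hXU hx))
      · exact absurd h (hbar_ne_v (hXU hx))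
    · intro h; exact Or.inl (Or.inl (Or.inl (Or.inl (Or.inl (Or.inr ⟨x, ⟨hx, h⟩, rfl⟩)))))
  have hyM : ∀ {y}, y ∈ Y → (y ∈ M ↔ y ∈ J) := by
    intro y hy
    rw [hMmem]
    constructor
    · rintro ((((((h | ⟨c, hc, hcx⟩) | h) | ⟨c, hc, hcx⟩) | h) | ⟨c, hc, hcx⟩) | h | h)
      · exact absurd (hI h) (Set.disjoint_right.mp hXY hy)
      · exact absurd (hYU hy) (hcx ▸ hbarU (hXU hc.1))
      · exact h
      · exact absurd (hYU hy) (hcx ▸ hbarU (hYU hc.1))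
      · exact absurd h (Set.disjoint_left.mp hYZ hy)
      · exact absurd (hYU hy) (hcx ▸ hbarU (hZU hc))
      · exact absurd (hYU hy) (h ▸ hu_notU)
      · exact absurd (hYU hy) (h ▸ hv_notU)
    · intro h; exact Or.inl (Or.inl (Or.inl (Or.inl (Or.inr h))))
  have hbyM : ∀ {y}, y ∈ Y → (bar y ∈ M ↔ y ∉ J) := by
    intro y hy
    rw [hMmem]
    constructor
    · rintro ((((((h | ⟨c, hc, hcx⟩) | h) | ⟨c, hc, hcx⟩) | h) | ⟨c, hc, hcx⟩) | h | h)
      · exact absurd (hXU (hI h)) (hbarU (hYU hy))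
      · cases hbarinj hcx; exact absurd hc.1 (Set.disjoint_right.mp hXY hy)
      · exact absurd (hYU (hJ h)) (hbarU (hYU hy))
      · cases hbarinj hcx; exact hc.2
      · exact absurd (hZU h) (hbarU (hYU hy))
      · cases hbarinj hcx; exact absurd hc (Set.disjoint_left.mp hYZ hy)
      · exact absurd h (hbar_ne_u (hYU hy))
      · exact absurd h (hbar_ne_v (hYU hy))
    · intro h; exact Or.inl (Or.inl (Or.inl (Or.inr ⟨y, ⟨hy, h⟩, rfl⟩)))
  have hzM : ∀ {z}, z ∈ Z → z ∈ M := by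
    intro z hz
    exact hMmem.mpr (Or.inl (Or.inl (Or.inr hz)))
  have hbzM : ∀ {z}, z ∈ Z → bar z ∈ M := by
    intro z hz
    exact hMmem.mpr (Or.inl (Or.inr ⟨z, hz, rfl⟩))
  have huM : u ∈ M := hMmem.mpr (Or.inr (Or.inl rfl))
  have hvM : v ∈ M := hMmem.mpr (Or.inr (Or.inr rfl))
  have hwM : w ∉ M := by
    rw [hMmem]
    rintro ((((((h | ⟨c, hc, hcx⟩) | h) | ⟨c, hc, hcx⟩) | h) | ⟨c, hc, hcx⟩) | h | h)
    · exact hw_notU (hXU (hI h))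
    · exact hbar_ne_w (hXU hc.1) hcx
    · exact hw_notU (hYU (hJ h))
    · exact hbar_ne_w (hYU hc.1) hcx
    · exact hw_notU (hZU h)
    · exact hbar_ne_w (hZU hc) hcx
    · exact huw h.symm
    · exact hvw h.symm
  -- membership facts for O
  have hxO : ∀ {x}, x ∈ X → (x ∈ O ↔ x ∈ I) := by
    intro x hx
    rw [hOmem]
    constructor
    · rintro (h | ⟨c, hc, hcx⟩)
      · exact h
      · exact absurd (hXU hx) (hcx ▸ hbarU (hXU hc.1))
    · exact Or.inl
  have hbxO : ∀ {x}, x ∈ X → (bar x ∈ O ↔ x ∉ I) := by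
    intro x hx
    rw [hOmem]
    constructor
    · rintro (h | ⟨c, hc, hcx⟩)
      · exact absurd (hXU (hI h)) (hbarU (hXU hx))
      · cases hbarinj hcx; exact hc.2
    · intro h; exact Or.inr ⟨x, ⟨hx, h⟩, rfl⟩
  have hyO : ∀ {y}, y ∈ Y → y ∉ O := by
    intro y hy h
    rcases hOmem.mp h with h | ⟨c, hc, hcx⟩
    · exact Set.disjoint_right.mp hXY hy (hI h)
    · exact hbarU (hXU hc.1) (hcx ▸ hYU hy)
  have hbyO : ∀ {y}, y ∈ Y → bar y ∉ O := by
    intro y hy h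
    rcases hOmem.mp h with h | ⟨c, hc, hcx⟩
    · exact hbarU (hYU hy) (hXU (hI h))
    · cases hbarinj hcx; exact Set.disjoint_right.mp hXY hy hc.1
  have hzO : ∀ {z}, z ∈ Z → z ∉ O := by
    intro z hz h
    rcases hOmem.mp h with h | ⟨c, hc, hcx⟩
    · exact Set.disjoint_right.mp hXZ hz (hI h)
    · exact hbarU (hXU hc.1) (hcx ▸ hZU hz)
  have hbzO : ∀ {z}, z ∈ Z → bar z ∉ O := by
    intro z hz h
    rcases hOmem.mp h with h | ⟨c, hc, hcx⟩
    · exact hbarU (hZU hz) (hXU (hI h))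
    · cases hbarinj hcx; exact Set.disjoint_right.mp hXZ hz hc.1
  have huO : u ∉ O := by
    intro h
    rcases hOmem.mp h with h | ⟨c, hc, hcx⟩
    · exact hu_notU (hXU (hI h))
    · exact hbar_ne_u (hXU hc.1) hcx
  have hvO : v ∉ O := by
    intro h
    rcases hOmem.mp h with h | ⟨c, hc, hcx⟩
    · exact hv_notU (hXU (hI h))
    · exact hbar_ne_v (hXU hc.1) hcx
  have hwO : w ∉ O := by
    intro h
    rcases hOmem.mp h with h | ⟨c, hc, hcx⟩
    · exact hw_notU (hXU (hI h))
    · exact hbar_ne_w (hXU hc.1) hcx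
  -- constructors for PPhi membership
  have memX : ∀ {x}, x ∈ X → ∀ {r : Rule A},
      (r = ⟨{x, bar x}, ∅, ∅⟩ ∨ r = ⟨{u}, {x, bar x}, ∅⟩ ∨
       r = ⟨{w}, {x, bar x}, ∅⟩ ∨ r = ⟨{x}, {u, w}, ∅⟩ ∨ r = ⟨{bar x}, {u, w}, ∅⟩) →
      r ∈ P := by
    intro x hx r h
    exact Or.inl (Or.inl (Or.inl (Or.inl ⟨x, hx, h⟩)))
  have memY : ∀ {y}, y ∈ Y → ∀ {r : Rule A},
      (r = ⟨{y, bar y}, {v}, ∅⟩ ∨ r = ⟨{u}, {y, bar y}, ∅⟩ ∨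
       r = ⟨{w}, {y, bar y}, ∅⟩ ∨ r = ⟨{y}, {u, w}, ∅⟩ ∨ r = ⟨{bar y}, {u, w}, ∅⟩ ∨
       r = ⟨{v}, {y}, ∅⟩ ∨ r = ⟨{v}, {bar y}, ∅⟩) →
      r ∈ P := by
    intro y hy r h
    exact Or.inl (Or.inl (Or.inl (Or.inr ⟨y, hy, h⟩)))
  have memZ : ∀ {z}, z ∈ Z → ∀ {r : Rule A},
      (r = ⟨{z, bar z}, {v}, ∅⟩ ∨ r = ⟨{u}, {z}, {w}⟩ ∨ r = ⟨{u}, {bar z}, {w}⟩ ∨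
       r = ⟨{v}, {z}, ∅⟩ ∨ r = ⟨{v}, {bar z}, ∅⟩ ∨ r = ⟨{z}, {w}, ∅⟩ ∨
       r = ⟨{bar z}, {w}, ∅⟩ ∨ r = ⟨{z}, {u}, ∅⟩ ∨ r = ⟨{bar z}, {u}, ∅⟩ ∨
       r = ⟨{w, u}, {z, bar z}, ∅⟩) →
      r ∈ P := by
    intro z hz r h
    exact Or.inl (Or.inl (Or.inr ⟨z, hz, h⟩))
  have memLast : ∀ {r : Rule A},
      (r = ⟨{v}, {w}, ∅⟩ ∨ r = ⟨{v}, {u}, ∅⟩ ∨ r = ⟨{v}, ∅, {u}⟩) → r ∈ P := by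
    rintro r (rfl | rfl | rfl)
    · exact Or.inr (Set.mem_insert _ _)
    · exact Or.inr (Set.mem_insert_of_mem _ (Set.mem_insert _ _))
    · exact Or.inr (Set.mem_insert_of_mem _ (Set.mem_insert_of_mem _ rfl))
  have negw : ({w} : Set A) ∩ M = ∅ := by
    ext a; simp only [Set.mem_inter_iff, Set.mem_singleton_iff, Set.mem_empty_iff_false,
      iff_false, not_and]
    rintro rfl; exact hwM
  have negtriv : (∅ : Set A) ∩ M = ∅ := Set.empty_inter M
  have pairmem₁ : ∀ (a b : A), a ∈ ({a, b} : Set A) := fun a b => Set.mem_insert a {b}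
  have pairmem₂ : ∀ (a b : A), b ∈ ({a, b} : Set A) :=
    fun a b => Set.mem_insert_of_mem a rfl
  have singNe : ∀ {a : A} {K : Set A}, (({a} : Set A) ∩ K).Nonempty → a ∈ K := by
    rintro a K ⟨b, hb, hbK⟩
    rcases hb with rfl
    exact hbK
  have pairNe : ∀ {a b : A} {K : Set A}, (({a, b} : Set A) ∩ K).Nonempty →
      a ∈ K ∨ b ∈ K := by
    rintro a b K ⟨c, hc, hcK⟩
    rcases hc with rfl | rfl
    · exact Or.inl hcK
    · exact Or.inr hcK
  -- M is a model of the reduct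
  have hMmodel : isModel (reduct P M) M := by
    rintro r' ⟨r, hrP, hneg, rfl⟩ hpos -
    rcases hrP with (((hX' | hY') | hZ') | hD') | hL'
    · obtain ⟨x, hx, (rfl | rfl | rfl | rfl | rfl)⟩ := hX'
      · by_cases hxi : x ∈ I
        · exact ⟨x, pairmem₁ x _, (hxM hx).mpr hxi⟩
        · exact ⟨bar x, pairmem₂ x _, (hbxM hx).mpr hxi⟩
      · exact ⟨u, rfl, huM⟩
      · exact absurd ((hxM hx).mp (hpos (pairmem₁ x _))) ((hbxM hx).mp (hpos (pairmem₂ x _)))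
      · exact absurd (hpos (pairmem₂ u w)) hwM
      · exact absurd (hpos (pairmem₂ u w)) hwM
    · obtain ⟨y, hy, (rfl | rfl | rfl | rfl | rfl | rfl | rfl)⟩ := hY'
      · by_cases hyj : y ∈ J
        · exact ⟨y, pairmem₁ y _, (hyM hy).mpr hyj⟩
        · exact ⟨bar y, pairmem₂ y _, (hbyM hy).mpr hyj⟩
      · exact ⟨u, rfl, huM⟩
      · exact absurd ((hyM hy).mp (hpos (pairmem₁ y _))) ((hbyM hy).mp (hpos (pairmem₂ y _)))
      · exact absurd (hpos (pairmem₂ u w)) hwM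
      · exact absurd (hpos (pairmem₂ u w)) hwM
      · exact ⟨v, rfl, hvM⟩
      · exact ⟨v, rfl, hvM⟩
    · obtain ⟨z, hz, (rfl | rfl | rfl | rfl | rfl | rfl | rfl | rfl | rfl | rfl)⟩ := hZ'
      · exact ⟨z, pairmem₁ z _, hzM hz⟩
      · exact ⟨u, rfl, huM⟩
      · exact ⟨u, rfl, huM⟩
      · exact ⟨v, rfl, hvM⟩
      · exact ⟨v, rfl, hvM⟩
      · exact ⟨z, rfl, hzM hz⟩
      · exact ⟨bar z, rfl, hbzM hz⟩
      · exact ⟨z, rfl, hzM hz⟩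
      · exact ⟨bar z, rfl, hbzM hz⟩
      · exact ⟨u, pairmem₂ w u, huM⟩
    · obtain ⟨d, hd, rfl⟩ := hD'
      exact ⟨u, pairmem₂ w u, huM⟩
    · rcases hL' with rfl | rfl | rfl
      · exact absurd (hpos rfl) hwM
      · exact ⟨v, rfl, hvM⟩
      · exact absurd hneg (Set.nonempty_iff_ne_empty.mp ⟨u, rfl, huM⟩)
  -- O is a model of the reduct
  have hOmodel : isModel (reduct P M) O := by
    rintro r' ⟨r, hrP, hneg, rfl⟩ hpos -
    rcases hrP with (((hX' | hY') | hZ') | hD') | hL'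
    · obtain ⟨x, hx, (rfl | rfl | rfl | rfl | rfl)⟩ := hX'
      · by_cases hxi : x ∈ I
        · exact ⟨x, pairmem₁ x _, (hxO hx).mpr hxi⟩
        · exact ⟨bar x, pairmem₂ x _, (hbxO hx).mpr hxi⟩
      · exact absurd ((hxO hx).mp (hpos (pairmem₁ x _))) ((hbxO hx).mp (hpos (pairmem₂ x _)))
      · exact absurd ((hxO hx).mp (hpos (pairmem₁ x _))) ((hbxO hx).mp (hpos (pairmem₂ x _)))
      · exact absurd (hpos (pairmem₁ u w)) huO
      · exact absurd (hpos (pairmem₁ u w)) huO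
    · obtain ⟨y, hy, (rfl | rfl | rfl | rfl | rfl | rfl | rfl)⟩ := hY'
      · exact absurd (hpos rfl) hvO
      · exact absurd (hpos (pairmem₁ y _)) (hyO hy)
      · exact absurd (hpos (pairmem₁ y _)) (hyO hy)
      · exact absurd (hpos (pairmem₁ u w)) huO
      · exact absurd (hpos (pairmem₁ u w)) huO
      · exact absurd (hpos rfl) (hyO hy)
      · exact absurd (hpos rfl) (hbyO hy)
    · obtain ⟨z, hz, (rfl | rfl | rfl | rfl | rfl | rfl | rfl | rfl | rfl | rfl)⟩ := hZ'
      · exact absurd (hpos rfl) hvO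
      · exact absurd (hpos rfl) (hzO hz)
      · exact absurd (hpos rfl) (hbzO hz)
      · exact absurd (hpos rfl) (hzO hz)
      · exact absurd (hpos rfl) (hbzO hz)
      · exact absurd (hpos rfl) hwO
      · exact absurd (hpos rfl) hwO
      · exact absurd (hpos rfl) huO
      · exact absurd (hpos rfl) huO
      · exact absurd (hpos (pairmem₁ z _)) (hzO hz)
    · obtain ⟨d, hd, rfl⟩ := hD'
      obtain ⟨a, ha12, haY⟩ := (hDall d hd).2.1
      rcases ha12 with h1 | h2
      · exact absurd (hpos (Or.inl h1)) (hyO haY)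
      · exact absurd (hpos (Or.inr ⟨a, h2, rfl⟩)) (hbyO haY)
    · rcases hL' with rfl | rfl | rfl
      · exact absurd (hpos rfl) hwO
      · exact absurd (hpos rfl) huO
      · exact absurd hneg (Set.nonempty_iff_ne_empty.mp ⟨u, rfl, huM⟩)
  constructor
  · -- forward direction
    intro hmod
    have app : ∀ (r : Rule A), r ∈ P → r.neg ∩ M = ∅ → r.pos ⊆ N →
        (r.head ∩ N).Nonempty := by
      intro r hr hneg hpos
      exact hmod ⟨r.head, r.pos, ∅⟩ ⟨r, hr, hneg, rfl⟩ hpos (Set.empty_inter N)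
    by_cases hv : v ∈ N
    · -- N = M
      left
      have huN : u ∈ N := by
        obtain ⟨z0, hz0⟩ := hZne
        have h1 := app ⟨{z0, bar z0}, {v}, ∅⟩ (memZ hz0 (Or.inl rfl)) negtriv
          (Set.singleton_subset_iff.mpr hv)
        rcases pairNe h1 with h | h
        · exact singNe (app ⟨{u}, {z0}, {w}⟩ (memZ hz0 (Or.inr (Or.inl rfl))) negw
            (Set.singleton_subset_iff.mpr h))
        · exact singNe (app ⟨{u}, {bar z0}, {w}⟩ (memZ hz0 (Or.inr (Or.inr (Or.inl rfl))))
            negw (Set.singleton_subset_iff.mpr h))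
      have hzN : ∀ {z}, z ∈ Z → z ∈ N := by
        intro z hz
        exact singNe (app ⟨{z}, {u}, ∅⟩
          (memZ hz (Or.inr (Or.inr (Or.inr (Or.inr (Or.inr (Or.inr (Or.inr (Or.inl rfl)))))))))
          negtriv (Set.singleton_subset_iff.mpr huN))
      have hbzN : ∀ {z}, z ∈ Z → bar z ∈ N := by
        intro z hz
        exact singNe (app ⟨{bar z}, {u}, ∅⟩
          (memZ hz (Or.inr (Or.inr (Or.inr (Or.inr (Or.inr (Or.inr (Or.inr (Or.inr (Or.inl rfl))))))))))
          negtriv (Set.singleton_subset_iff.mpr huN))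
      have hxfact : ∀ {x}, x ∈ X → x ∈ N ∨ bar x ∈ N := by
        intro x hx
        exact pairNe (app ⟨{x, bar x}, ∅, ∅⟩ (memX hx (Or.inl rfl)) negtriv
          (Set.empty_subset N))
      have hyfact : ∀ {y}, y ∈ Y → y ∈ N ∨ bar y ∈ N := by
        intro y hy
        exact pairNe (app ⟨{y, bar y}, {v}, ∅⟩ (memY hy (Or.inl rfl)) negtriv
          (Set.singleton_subset_iff.mpr hv))
      have hMN : M ⊆ N := by
        intro a ha
        rcases hMmem.mp ha with
          ((((((h | ⟨c, hc, rfl⟩) | h) | ⟨c, hc, rfl⟩) | h) | ⟨c, hc, rfl⟩) | h | h)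
        · rcases hxfact (hI h) with hn | hn
          · exact hn
          · exact absurd ((hbxM (hI h)).mp (hNsub hn)) (fun hni => hni h)
        · rcases hxfact hc.1 with hn | hn
          · exact absurd ((hxM hc.1).mp (hNsub hn)) hc.2
          · exact hn
        · rcases hyfact (hJ h) with hn | hn
          · exact hn
          · exact absurd ((hbyM (hJ h)).mp (hNsub hn)) (fun hnj => hnj h)
        · rcases hyfact hc.1 with hn | hn
          · exact absurd ((hyM hc.1).mp (hNsub hn)) hc.2
          · exact hn
        · exact hzN h
        · exact hbzN hc
        · exact h ▸ huN
        · exact h ▸ hv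
      exact Set.Subset.antisymm hNsub hMN
    · -- N = O
      right
      have hNO : N ⊆ O := by
        intro a ha
        rcases hMmem.mp (hNsub ha) with
          ((((((h | ⟨c, hc, rfl⟩) | h) | ⟨c, hc, rfl⟩) | h) | ⟨c, hc, rfl⟩) | h | h)
        · exact hOmem.mpr (Or.inl h)
        · exact hOmem.mpr (Or.inr ⟨c, hc, rfl⟩)
        · exact absurd (singNe (app ⟨{v}, {a}, ∅⟩
            (memY (hJ h) (Or.inr (Or.inr (Or.inr (Or.inr (Or.inr (Or.inl rfl)))))))
            negtriv (Set.singleton_subset_iff.mpr ha))) hv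
        · exact absurd (singNe (app ⟨{v}, {bar c}, ∅⟩
            (memY hc.1 (Or.inr (Or.inr (Or.inr (Or.inr (Or.inr (Or.inr rfl)))))))
            negtriv (Set.singleton_subset_iff.mpr ha))) hv
        · exact absurd (singNe (app ⟨{v}, {a}, ∅⟩
            (memZ h (Or.inr (Or.inr (Or.inr (Or.inl rfl)))))
            negtriv (Set.singleton_subset_iff.mpr ha))) hv
        · exact absurd (singNe (app ⟨{v}, {bar c}, ∅⟩
            (memZ hc (Or.inr (Or.inr (Or.inr (Or.inr (Or.inl rfl))))))
            negtriv (Set.singleton_subset_iff.mpr ha))) hv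
        · exact absurd (singNe (app ⟨{v}, {u}, ∅⟩ (memLast (Or.inr (Or.inl rfl)))
            negtriv (Set.singleton_subset_iff.mpr (h ▸ ha)))) hv
        · exact absurd (h ▸ ha) hv
      have hON : O ⊆ N := by
        intro a ha
        rcases hOmem.mp ha with h | ⟨c, hc, rfl⟩
        · rcases pairNe (app ⟨{a, bar a}, ∅, ∅⟩ (memX (hI h) (Or.inl rfl)) negtriv
            (Set.empty_subset N)) with hn | hn
          · exact hn
          · exact absurd ((hbxM (hI h)).mp (hNsub hn)) (fun hni => hni h)
        · rcases pairNe (app ⟨{c, bar c}, ∅, ∅⟩ (memX hc.1 (Or.inl rfl)) negtriv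
            (Set.empty_subset N)) with hn | hn
          · exact absurd ((hxM hc.1).mp (hNsub hn)) hc.2
          · exact hn
      exact Set.Subset.antisymm hNO hON
  · rintro (rfl | rfl)
    · exact hMmodel
    · exact hOmodel
end

section
/- Let P be a Φ-norm-reduction for a QBF Φ = ∀X∃Y φ with φ in CNF. If Φ is false, then there exists I ⊆ X such that AS(P ∪ F_I) = ∅ where F_I = I ∪ {x̄ : x ∈ X \ I}; hence P is not super-coherent. -/
def UallN {A : Type} (X Y : Set A) (bar : A → A) (v w : A) : Set A :=
  X ∪ Y ∪ bar '' X ∪ bar '' Y ∪ {v, w}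

def OmodN {A : Type} (X : Set A) (bar : A → A) (v w : A) (Jstar : Set A) : Set A :=
  X ∪ bar '' X ∪ Jstar ∪ {v, w}

def MmodN {A : Type} (X : Set A) (bar : A → A) (v : A) (I : Set A) : Set A :=
  I ∪ bar '' (X \ I) ∪ {v}

def NmodN {A : Type} (X Y : Set A) (bar : A → A) (w : A) (I J : Set A) : Set A :=
  I ∪ bar '' (X \ I) ∪ J ∪ bar '' (Y \ J) ∪ {w}

/-- Satisfaction of a CNF given by the set C of clauses (positive vars, negated vars)
by the assignment making exactly the variables in S true. -/
def cnfSat {A : Type} (C : Set (Set A × Set A)) (S : Set A) : Prop :=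
  ∀ c ∈ C, (c.1 ∩ S).Nonempty ∨ (c.2 \ S).Nonempty


lemma isModel_union_iff {A : Type} (P Q : Program A) (I : Set A) :
    isModel (P ∪ Q) I ↔ isModel P I ∧ isModel Q I := by
  constructor
  · exact fun h => ⟨fun r hr => h r (Or.inl hr), fun r hr => h r (Or.inr hr)⟩
  · rintro ⟨h1, h2⟩ r (hr | hr)
    · exact h1 r hr
    · exact h2 r hr

lemma isModel_reduct_self {A : Type} (P : Program A) (M : Set A) :
    isModel (reduct P M) M ↔ isModel P M := by
  constructor
  · intro h r hr hpos hneg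
    have := h ⟨r.head, r.pos, ∅⟩ ⟨r, hr, hneg, rfl⟩
    exact this hpos (by simp)
  · rintro h r' ⟨r, hr, hneg, rfl⟩ hpos _
    exact h r hr hpos hneg

lemma isModel_reduct_facts {A : Type} (F M N : Set A) :
    isModel (reduct (factsOf F) M) N ↔ F ⊆ N := by
  constructor
  · intro h a ha
    have := h ⟨{a}, ∅, ∅⟩ ⟨⟨{a}, ∅, ∅⟩, ⟨a, ha, rfl⟩, by simp, rfl⟩
      (by simp) (by simp)
    simpa using this
  · rintro h r' ⟨r, ⟨a, ha, rfl⟩, _, rfl⟩ _ _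
    exact ⟨a, rfl, h ha⟩

/-- If Φ = ∀X∃Y φ is false, then any Φ-norm-reduction P is not super-coherent:
there is I ⊆ X such that P ∪ F_I has no answer set. -/
theorem phiNormReduction_false_not_superCoherent {A : Type}
    (X Y : Set A) (bar : A → A) (v w : A) (C : Set (Set A × Set A)) (P : Program A)
    (hXne : X.Nonempty) (hYne : Y.Nonempty) (hXY : Disjoint X Y)
    (hbarinj : Function.Injective bar)
    (hbarfresh : Disjoint (bar '' (X ∪ Y)) (X ∪ Y))
    (hvw : v ≠ w)
    (hvfresh : v ∉ X ∪ Y ∪ bar '' (X ∪ Y))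
    (hwfresh : w ∉ X ∪ Y ∪ bar '' (X ∪ Y))
    (hCvars : ∀ c ∈ C, c.1 ∪ c.2 ⊆ X ∪ Y)
    (hCall : ∀ c ∈ C, ((c.1 ∪ c.2) ∩ X).Nonempty ∧ ((c.1 ∪ c.2) ∩ Y).Nonempty)
    (hatoms : atomsOf P = UallN X Y bar v w)
    (hmodels : ∀ M ⊆ UallN X Y bar v w, (isModel P M ↔
       ((∃ J, J ⊆ Y ∧ ∃ Jstar, J ∪ bar '' (Y \ J) ⊆ Jstar ∧ Jstar ⊆ Y ∪ bar '' Y ∧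
          M = OmodN X bar v w Jstar) ∨
        (∃ I, I ⊆ X ∧ M = MmodN X bar v I) ∨
        (∃ I, I ⊆ X ∧ ∃ J, J ⊆ Y ∧ cnfSat C (I ∪ J) ∧ M = NmodN X Y bar w I J))))
    (hredM : ∀ I, I ⊆ X → ∀ N ⊆ MmodN X bar v I,
       (isModel (reduct P (MmodN X bar v I)) N ↔
         (N = MmodN X bar v I ∨ N = MmodN X bar v I \ {v})))
    (hredN : ∀ I, I ⊆ X → ∀ J, J ⊆ Y → cnfSat C (I ∪ J) →
       ∀ N ⊆ NmodN X Y bar w I J,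
         (isModel (reduct P (NmodN X Y bar w I J)) N ↔ N = NmodN X Y bar w I J))
    (hredO : ∀ J, J ⊆ Y → ∀ Jstar, J ∪ bar '' (Y \ J) ⊆ Jstar → Jstar ⊆ Y ∪ bar '' Y →
       ∀ M ⊆ UallN X Y bar v w, isModel (reduct P (OmodN X bar v w Jstar)) M →
         ((∀ y ∈ Y, y ∈ Jstar → bar y ∉ Jstar → w ∈ M → y ∈ M) ∧
          (∀ y ∈ Y, bar y ∈ Jstar → y ∉ Jstar → w ∈ M → bar y ∈ M) ∧
          ((M ∩ (Y ∪ bar '' Y)).Nonempty → w ∈ M) ∧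
          (∀ c ∈ C, bar '' c.1 ∪ c.2 ⊆ M → v ∈ M) ∧
          (((∃ x ∈ X, x ∈ M ∧ bar x ∈ M) ∨ (∃ y ∈ Y, y ∈ M ∧ bar y ∈ M) ∨
              ({v, w} : Set A) ⊆ M) → X ∪ bar '' X ∪ {v, w} ⊆ M)))
    (hP1 : ∀ M O N : Set A, M ⊆ O → isModel (reduct P M) N → isModel (reduct P O) N)
    (hfalse : ∃ I, I ⊆ X ∧ ∀ J, J ⊆ Y → ¬ cnfSat C (I ∪ J)) :
    (∃ I, I ⊆ X ∧ ∀ M, ¬ isAnswerSet (P ∪ factsOf (I ∪ bar '' (X \ I))) M) ∧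
      ¬ superCoherent P := by
  obtain ⟨I, hI, hIbad⟩ := hfalse
  -- freshness facts
  have hbarXY : ∀ b ∈ X ∪ Y, bar b ∉ X ∪ Y := fun b hb =>
    Set.disjoint_left.mp hbarfresh (Set.mem_image_of_mem bar hb)
  have hvX : v ∉ X ∪ Y := fun h => hvfresh (Or.inl h)
  have hwX : w ∉ X ∪ Y := fun h => hwfresh (Or.inl h)
  have hvbar : v ∉ bar '' (X ∪ Y) := fun h => hvfresh (Or.inr h)
  have hwbar : w ∉ bar '' (X ∪ Y) := fun h => hwfresh (Or.inr h)
  set F : Set A := I ∪ bar '' (X \ I) with hF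
  have hFU : F ⊆ UallN X Y bar v w := by
    rintro a (ha | ⟨b, hb, rfl⟩)
    · exact Or.inl (Or.inl (Or.inl (Or.inl (hI ha))))
    · exact Or.inl (Or.inl (Or.inr ⟨b, hb.1, rfl⟩))
  have key : ∀ M, ¬ isAnswerSet (P ∪ factsOf F) M := by
    intro M hAS
    obtain ⟨hmod, hmin⟩ := hAS
    rw [reduct_union, isModel_union_iff] at hmod
    obtain ⟨hPM, hFM⟩ := hmod
    have hFMsub : F ⊆ M := (isModel_reduct_facts F M M).mp hFM
    -- Step 1 : M ⊆ UallN
    have hMU : M ⊆ UallN X Y bar v w := by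
      have hNmod : isModel (reduct (P ∪ factsOf F) M) (M ∩ UallN X Y bar v w) := by
        rintro r' ⟨r, hr, hneg, rfl⟩ hpos _
        have hposM : r.pos ⊆ M := hpos.trans Set.inter_subset_left
        have hHM : (r.head ∩ M).Nonempty := by
          rcases hr with hr | hr
          · exact (isModel_reduct_self P M).mp hPM r hr hposM hneg
          · obtain ⟨a, ha, rfl⟩ := hr
            exact ⟨a, rfl, hFMsub ha⟩
        obtain ⟨a, haH, haM⟩ := hHM
        have haU : a ∈ UallN X Y bar v w := by
          rcases hr with hr | hr
          · rw [← hatoms]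
            exact Set.mem_biUnion hr (Or.inl (Or.inl haH))
          · obtain ⟨b, hb, rfl⟩ := hr
            simp only [Set.mem_singleton_iff] at haH
            exact haH ▸ hFU hb
        exact ⟨a, haH, haM, haU⟩
      have := hmin (M ∩ UallN X Y bar v w) Set.inter_subset_left hNmod
      rw [← this]
      exact Set.inter_subset_right
    have hMP : isModel P M := (isModel_reduct_self P M).mp hPM
    -- case split per hmodels
    rcases (hmodels M hMU).mp hMP with ⟨J, hJ, Jstar, hJs1, hJs2, rfl⟩ |
      ⟨I', hI', rfl⟩ | ⟨I', hI', J, hJ, hsat, rfl⟩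
    · -- O case : MmodN I is a proper submodel
      set N := MmodN X bar v I with hN
      have hNM : N ⊆ MmodN X bar v I := subset_rfl
      have hNmod : isModel (reduct P N) N :=
        (hredM I hI N subset_rfl).mpr (Or.inl rfl)
      have hNsubO : N ⊆ OmodN X bar v w Jstar := by
        rintro a ((ha | ⟨b, hb, rfl⟩) | ha)
        · exact Or.inl (Or.inl (Or.inl (hI ha)))
        · exact Or.inl (Or.inl (Or.inr ⟨b, hb.1, rfl⟩))
        · exact Or.inr (Or.inl ha)
      have hNmodO : isModel (reduct P (OmodN X bar v w Jstar)) N :=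
        hP1 N _ N hNsubO hNmod
      have hNFmod : isModel (reduct (P ∪ factsOf F) (OmodN X bar v w Jstar)) N := by
        rw [reduct_union, isModel_union_iff]
        refine ⟨hNmodO, (isModel_reduct_facts _ _ _).mpr ?_⟩
        rintro a (ha | ha)
        · exact Or.inl (Or.inl ha)
        · exact Or.inl (Or.inr ha)
      have heq := hmin N hNsubO hNFmod
      have hwO : w ∈ OmodN X bar v w Jstar := Or.inr (Or.inr rfl)
      rw [← heq] at hwO
      rcases hwO with (hw | ⟨b, hb, hbe⟩) | hw
      · exact hwX (Or.inl (hI hw))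
      · exact hwbar ⟨b, Or.inl hb.1, hbe⟩
      · exact hvw hw.symm
    · -- M case : first show I' = I
      have hII : I' = I := by
        apply Set.Subset.antisymm
        · intro x hx
          by_contra hxI
          have hbF : bar x ∈ F := Or.inr ⟨x, ⟨hI' hx, hxI⟩, rfl⟩
          rcases hFMsub hbF with (h | ⟨b, hb, hbe⟩) | h
          · exact hbarXY x (Or.inl (hI' hx)) (Or.inl (hI' h))
          · exact (hbarinj hbe ▸ hb.2) hx
          · exact hvbar ⟨x, Or.inl (hI' hx), h⟩
        · intro x hx
          rcases hFMsub (Or.inl hx) with (h | ⟨b, hb, hbe⟩) | h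
          · exact h
          · exact absurd (show bar b ∈ X ∪ Y by rw [hbe]; exact Or.inl (hI hx))
              (hbarXY b (Or.inl hb.1))
          · exact absurd (h ▸ Or.inl (hI hx) : v ∈ X ∪ Y) hvX
      subst hII
      set N := MmodN X bar v I' \ {v} with hN
      have hNmod : isModel (reduct P (MmodN X bar v I')) N :=
        (hredM I' hI' N Set.diff_subset).mpr (Or.inr rfl)
      have hFN : F ⊆ N := by
        rintro a ha
        refine ⟨?_, ?_⟩
        · rcases ha with h | ⟨b, hb, rfl⟩
          · exact Or.inl (Or.inl h)
          · exact Or.inl (Or.inr ⟨b, hb, rfl⟩)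
        · rcases ha with h | ⟨b, hb, rfl⟩
          · exact fun hc => hvX (Or.inl (hI (hc ▸ h)))
          · exact fun hc => hvbar ⟨b, Or.inl hb.1, hc⟩
      have hNFmod : isModel (reduct (P ∪ factsOf F) (MmodN X bar v I')) N := by
        rw [reduct_union, isModel_union_iff]
        exact ⟨hNmod, (isModel_reduct_facts _ _ _).mpr hFN⟩
      have heq := hmin N Set.diff_subset hNFmod
      have hvM : v ∈ MmodN X bar v I' := Or.inr rfl
      rw [← heq] at hvM
      exact hvM.2 rfl
    · -- N case : I' = I contradicts falsity of Φ
      have hII : I' = I := by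
        apply Set.Subset.antisymm
        · intro x hx
          by_contra hxI
          have hbF : bar x ∈ F := Or.inr ⟨x, ⟨hI' hx, hxI⟩, rfl⟩
          rcases hFMsub hbF with ((((h | ⟨b, hb, hbe⟩) | h) | ⟨b, hb, hbe⟩) | h)
          · exact hbarXY x (Or.inl (hI' hx)) (Or.inl (hI' h))
          · exact (hbarinj hbe ▸ hb.2) hx
          · exact hbarXY x (Or.inl (hI' hx)) (Or.inr (hJ h))
          · exact hXY.le_bot ⟨hI' hx, hbarinj hbe ▸ hb.1⟩
          · exact hwbar ⟨x, Or.inl (hI' hx), h⟩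
        · intro x hx
          have hxX : x ∈ X := hI hx
          rcases hFMsub (Or.inl hx) with ((((h | ⟨b, hb, hbe⟩) | h) | ⟨b, hb, hbe⟩) | h)
          · exact h
          · exact absurd (hbe ▸ Or.inl hxX : bar b ∈ X ∪ Y)
              (hbarXY b (Or.inl hb.1))
          · exact absurd (hXY.le_bot ⟨hxX, hJ h⟩) (by simp)
          · exact absurd (hbe ▸ Or.inl hxX : bar b ∈ X ∪ Y)
              (hbarXY b (Or.inr hb.1))
          · exact absurd (h ▸ Or.inl hxX : w ∈ X ∪ Y) hwX
      exact hIbad J hJ (hII ▸ hsat)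
  refine ⟨⟨I, hI, key⟩, fun hsc => ?_⟩
  obtain ⟨M, hM⟩ := hsc F
  exact key M hM
end

section
/- For the program N_Φ constructed from a QBF Φ = ∀X∃Y φ with φ in CNF, the classical models of N_Φ are exactly: the sets O[J*] = X ∪ X̄ ∪ J* ∪ {v,w} for J ⊆ Y and J ∪ (Y\J)‾ ⊆ J* ⊆ Y ∪ Ȳ; the sets M[I] = I ∪ (X\I)‾ ∪ {v} for I ⊆ X; and the sets N[I,J] = I ∪ (X\I)‾ ∪ J ∪ (Y\J)‾ ∪ {w} for I ⊆ X, J ⊆ Y with I ∪ J ⊨ φ. -/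
/-- The program N_Φ for a QBF ∀X∃Y φ, where φ is a CNF given by the set C of
clauses, each clause c being a pair (positive variables, negated variables). -/
def NPhi {A : Type} (X Y : Set A) (bar : A → A) (v w : A)
    (C : Set (Set A × Set A)) : Program A :=
  {r | ∃ x ∈ X, r = ⟨{x}, ∅, {bar x}⟩ ∨ r = ⟨{bar x}, ∅, {x}⟩} ∪
  {r | ∃ y ∈ Y, r = ⟨{y}, {w}, {bar y}⟩ ∨ r = ⟨{bar y}, {w}, {y}⟩ ∨
       r = ⟨{w}, {y}, ∅⟩ ∨ r = ⟨{w}, {bar y}, ∅⟩} ∪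
  {r | ∃ z ∈ X ∪ bar '' X ∪ ({v, w} : Set A),
       r = ⟨{z}, {v, w}, ∅⟩ ∨ (∃ x ∈ X, r = ⟨{z}, {x, bar x}, ∅⟩) ∨
       (∃ y ∈ Y, r = ⟨{z}, {y, bar y}, ∅⟩)} ∪
  {r | ∃ c ∈ C, r = ⟨{v}, bar '' c.1 ∪ c.2, ∅⟩} ∪
  {⟨{w}, ∅, {v}⟩}

section NPhiHelpers

variable {A : Type} {X Y : Set A} {bar : A → A} {v w : A} {C : Set (Set A × Set A)}

lemma satRule_singleton (M : Set A) (h : A) (p n : Set A) :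
    satRule M ⟨{h}, p, n⟩ ↔ (p ⊆ M → n ∩ M = ∅ → h ∈ M) := by
  simp [satRule, Set.singleton_inter_nonempty]

lemma not_mem_of_inter_empty {a : A} {M : Set A} (h : ({a} : Set A) ∩ M = ∅) : a ∉ M :=
  fun hm => Set.eq_empty_iff_forall_notMem.mp h a ⟨rfl, hm⟩

lemma inter_empty_of_notMem {a : A} {M : Set A} (h : a ∉ M) : ({a} : Set A) ∩ M = ∅ := by
  ext b; simp only [Set.mem_inter_iff, Set.mem_singleton_iff, Set.mem_empty_iff_false, iff_false,
    not_and]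
  rintro rfl; exact h

lemma memN1a {x : A} (hx : x ∈ X) : (⟨{x}, ∅, {bar x}⟩ : Rule A) ∈ NPhi X Y bar v w C :=
  Set.mem_union_left _ <| Set.mem_union_left _ <| Set.mem_union_left _ <|
    Set.mem_union_left _ ⟨x, hx, Or.inl rfl⟩

lemma memN1b {x : A} (hx : x ∈ X) : (⟨{bar x}, ∅, {x}⟩ : Rule A) ∈ NPhi X Y bar v w C :=
  Set.mem_union_left _ <| Set.mem_union_left _ <| Set.mem_union_left _ <|
    Set.mem_union_left _ ⟨x, hx, Or.inr rfl⟩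

lemma memN2a {y : A} (hy : y ∈ Y) : (⟨{y}, {w}, {bar y}⟩ : Rule A) ∈ NPhi X Y bar v w C :=
  Set.mem_union_left _ <| Set.mem_union_left _ <| Set.mem_union_left _ <|
    Set.mem_union_right _ ⟨y, hy, Or.inl rfl⟩

lemma memN2b {y : A} (hy : y ∈ Y) : (⟨{bar y}, {w}, {y}⟩ : Rule A) ∈ NPhi X Y bar v w C :=
  Set.mem_union_left _ <| Set.mem_union_left _ <| Set.mem_union_left _ <|
    Set.mem_union_right _ ⟨y, hy, Or.inr (Or.inl rfl)⟩

lemma memN2c {y : A} (hy : y ∈ Y) : (⟨{w}, {y}, ∅⟩ : Rule A) ∈ NPhi X Y bar v w C :=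
  Set.mem_union_left _ <| Set.mem_union_left _ <| Set.mem_union_left _ <|
    Set.mem_union_right _ ⟨y, hy, Or.inr (Or.inr (Or.inl rfl))⟩

lemma memN2d {y : A} (hy : y ∈ Y) : (⟨{w}, {bar y}, ∅⟩ : Rule A) ∈ NPhi X Y bar v w C :=
  Set.mem_union_left _ <| Set.mem_union_left _ <| Set.mem_union_left _ <|
    Set.mem_union_right _ ⟨y, hy, Or.inr (Or.inr (Or.inr rfl))⟩

lemma memN3a {z : A} (hz : z ∈ X ∪ bar '' X ∪ ({v, w} : Set A)) :
    (⟨{z}, {v, w}, ∅⟩ : Rule A) ∈ NPhi X Y bar v w C :=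
  Set.mem_union_left _ <| Set.mem_union_left _ <| Set.mem_union_right _
    ⟨z, hz, Or.inl rfl⟩

lemma memN3b {z x : A} (hz : z ∈ X ∪ bar '' X ∪ ({v, w} : Set A)) (hx : x ∈ X) :
    (⟨{z}, {x, bar x}, ∅⟩ : Rule A) ∈ NPhi X Y bar v w C :=
  Set.mem_union_left _ <| Set.mem_union_left _ <| Set.mem_union_right _
    ⟨z, hz, Or.inr (Or.inl ⟨x, hx, rfl⟩)⟩

lemma memN3c {z y : A} (hz : z ∈ X ∪ bar '' X ∪ ({v, w} : Set A)) (hy : y ∈ Y) :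
    (⟨{z}, {y, bar y}, ∅⟩ : Rule A) ∈ NPhi X Y bar v w C :=
  Set.mem_union_left _ <| Set.mem_union_left _ <| Set.mem_union_right _
    ⟨z, hz, Or.inr (Or.inr ⟨y, hy, rfl⟩)⟩

lemma memN4 {c : Set A × Set A} (hc : c ∈ C) :
    (⟨{v}, bar '' c.1 ∪ c.2, ∅⟩ : Rule A) ∈ NPhi X Y bar v w C :=
  Set.mem_union_left _ <| Set.mem_union_right _ ⟨c, hc, rfl⟩

lemma memN5 : (⟨{w}, ∅, {v}⟩ : Rule A) ∈ NPhi X Y bar v w C :=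
  Set.mem_union_right _ rfl

lemma mem_UallN {a : A} :
    a ∈ UallN X Y bar v w ↔ a ∈ X ∨ a ∈ Y ∨ a ∈ bar '' X ∨ a ∈ bar '' Y ∨ a = v ∨ a = w := by
  simp only [UallN, Set.mem_union, Set.mem_insert_iff, Set.mem_singleton_iff, or_assoc]

lemma mem_OmodN {Jstar : Set A} {a : A} :
    a ∈ OmodN X bar v w Jstar ↔ a ∈ X ∨ a ∈ bar '' X ∨ a ∈ Jstar ∨ a = v ∨ a = w := by
  simp only [OmodN, Set.mem_union, Set.mem_insert_iff, Set.mem_singleton_iff, or_assoc]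

lemma mem_MmodN {I : Set A} {a : A} :
    a ∈ MmodN X bar v I ↔ a ∈ I ∨ a ∈ bar '' (X \ I) ∨ a = v := by
  simp only [MmodN, Set.mem_union, Set.mem_singleton_iff, or_assoc]

lemma mem_NmodN {I J : Set A} {a : A} :
    a ∈ NmodN X Y bar w I J ↔
      a ∈ I ∨ a ∈ bar '' (X \ I) ∨ a ∈ J ∨ a ∈ bar '' (Y \ J) ∨ a = w := by
  simp only [NmodN, Set.mem_union, Set.mem_singleton_iff, or_assoc]

end NPhiHelpers

/-- The classical models of N_Φ are exactly the sets O[J*], M[I], and N[I,J]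
with I ∪ J ⊨ φ. -/
theorem NPhi_models {A : Type}
    (X Y : Set A) (bar : A → A) (v w : A) (C : Set (Set A × Set A))
    (hXne : X.Nonempty) (hYne : Y.Nonempty) (hXY : Disjoint X Y)
    (hbarinj : Function.Injective bar)
    (hbarfresh : Disjoint (bar '' (X ∪ Y)) (X ∪ Y))
    (hvw : v ≠ w)
    (hvfresh : v ∉ X ∪ Y ∪ bar '' (X ∪ Y))
    (hwfresh : w ∉ X ∪ Y ∪ bar '' (X ∪ Y))
    (hCvars : ∀ c ∈ C, c.1 ∪ c.2 ⊆ X ∪ Y)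
    (hCall : ∀ c ∈ C, ((c.1 ∪ c.2) ∩ X).Nonempty ∧ ((c.1 ∪ c.2) ∩ Y).Nonempty) :
    ∀ M ⊆ UallN X Y bar v w,
      (isModel (NPhi X Y bar v w C) M ↔
        ((∃ J, J ⊆ Y ∧ ∃ Jstar, J ∪ bar '' (Y \ J) ⊆ Jstar ∧ Jstar ⊆ Y ∪ bar '' Y ∧
            M = OmodN X bar v w Jstar) ∨
         (∃ I, I ⊆ X ∧ M = MmodN X bar v I) ∨
         (∃ I, I ⊆ X ∧ ∃ J, J ⊆ Y ∧ cnfSat C (I ∪ J) ∧ M = NmodN X Y bar w I J))) := by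
  intro M hMU
  have hbnotin : ∀ a ∈ X ∪ Y, bar a ∉ X ∪ Y := fun a ha h =>
    Set.disjoint_left.mp hbarfresh ⟨a, ha, rfl⟩ h
  have hvXY : v ∉ X ∪ Y := fun h => hvfresh (Or.inl h)
  have hvb : v ∉ bar '' (X ∪ Y) := fun h => hvfresh (Or.inr h)
  have hwXY : w ∉ X ∪ Y := fun h => hwfresh (Or.inl h)
  have hwb : w ∉ bar '' (X ∪ Y) := fun h => hwfresh (Or.inr h)
  have hvmem : v ∈ X ∪ bar '' X ∪ ({v, w} : Set A) :=
    Set.mem_union_right _ (Set.mem_insert _ _)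
  have hwmem : w ∈ X ∪ bar '' X ∪ ({v, w} : Set A) :=
    Set.mem_union_right _ (Set.mem_insert_of_mem _ rfl)
  constructor
  · intro hM
    have F1 : ∀ x ∈ X, x ∈ M ∨ bar x ∈ M := by
      intro x hx
      by_cases hb : bar x ∈ M
      · exact Or.inr hb
      · exact Or.inl ((satRule_singleton M x ∅ {bar x}).mp (hM _ (memN1a hx))
          (Set.empty_subset M) (inter_empty_of_notMem hb))
    have F2 : w ∈ M → ∀ y ∈ Y, y ∈ M ∨ bar y ∈ M := by
      intro hw y hy
      by_cases hb : bar y ∈ M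
      · exact Or.inr hb
      · exact Or.inl ((satRule_singleton M y {w} {bar y}).mp (hM _ (memN2a hy))
          (Set.singleton_subset_iff.mpr hw) (inter_empty_of_notMem hb))
    have F3a : ∀ y ∈ Y, y ∈ M → w ∈ M := fun y hy hyM =>
      (satRule_singleton M w {y} ∅).mp (hM _ (memN2c hy))
        (Set.singleton_subset_iff.mpr hyM) (Set.empty_inter M)
    have F3b : ∀ y ∈ Y, bar y ∈ M → w ∈ M := fun y hy hyM =>
      (satRule_singleton M w {bar y} ∅).mp (hM _ (memN2d hy))
        (Set.singleton_subset_iff.mpr hyM) (Set.empty_inter M)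
    have F4 : ∀ z ∈ X ∪ bar '' X ∪ ({v, w} : Set A), v ∈ M → w ∈ M → z ∈ M :=
      fun z hz hv hw =>
      (satRule_singleton M z {v, w} ∅).mp (hM _ (memN3a hz))
        (Set.insert_subset_iff.mpr ⟨hv, Set.singleton_subset_iff.mpr hw⟩) (Set.empty_inter M)
    have F5 : ∀ z ∈ X ∪ bar '' X ∪ ({v, w} : Set A), ∀ x ∈ X, x ∈ M → bar x ∈ M → z ∈ M :=
      fun z hz x hx h1 h2 =>
      (satRule_singleton M z {x, bar x} ∅).mp (hM _ (memN3b hz hx))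
        (Set.insert_subset_iff.mpr ⟨h1, Set.singleton_subset_iff.mpr h2⟩) (Set.empty_inter M)
    have F6 : ∀ z ∈ X ∪ bar '' X ∪ ({v, w} : Set A), ∀ y ∈ Y, y ∈ M → bar y ∈ M → z ∈ M :=
      fun z hz y hy h1 h2 =>
      (satRule_singleton M z {y, bar y} ∅).mp (hM _ (memN3c hz hy))
        (Set.insert_subset_iff.mpr ⟨h1, Set.singleton_subset_iff.mpr h2⟩) (Set.empty_inter M)
    have F7 : ∀ c ∈ C, bar '' c.1 ∪ c.2 ⊆ M → v ∈ M := fun c hc hsub =>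
      (satRule_singleton M v _ ∅).mp (hM _ (memN4 hc)) hsub (Set.empty_inter M)
    have F8 : v ∈ M ∨ w ∈ M := by
      by_cases hv : v ∈ M
      · exact Or.inl hv
      · exact Or.inr ((satRule_singleton M w ∅ {v}).mp (hM _ memN5)
          (Set.empty_subset M) (inter_empty_of_notMem hv))
    by_cases hv : v ∈ M
    · by_cases hw : w ∈ M
      · left
        refine ⟨Y ∩ M, Set.inter_subset_left, M ∩ (Y ∪ bar '' Y), ?_,
          Set.inter_subset_right, ?_⟩
        · rintro a (⟨haY, haM⟩ | ⟨y, ⟨hyY, hyn⟩, rfl⟩)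
          · exact ⟨haM, Or.inl haY⟩
          · have hyM : y ∉ M := fun h => hyn ⟨hyY, h⟩
            exact ⟨(F2 hw y hyY).resolve_left hyM, Or.inr ⟨y, hyY, rfl⟩⟩
        · ext a
          rw [mem_OmodN]
          constructor
          · intro haM
            rcases mem_UallN.mp (hMU haM) with hX | hY | hbx | hby | rfl | rfl
            · exact Or.inl hX
            · exact Or.inr (Or.inr (Or.inl ⟨haM, Or.inl hY⟩))
            · exact Or.inr (Or.inl hbx)
            · exact Or.inr (Or.inr (Or.inl ⟨haM, Or.inr hby⟩))
            · exact Or.inr (Or.inr (Or.inr (Or.inl rfl)))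
            · exact Or.inr (Or.inr (Or.inr (Or.inr rfl)))
          · rintro (hX | hbx | hJs | rfl | rfl)
            · exact F4 a (Set.mem_union_left _ (Or.inl hX)) hv hw
            · exact F4 a (Set.mem_union_left _ (Or.inr hbx)) hv hw
            · exact hJs.1
            · exact hv
            · exact hw
      · right; left
        have hnb : ∀ x ∈ X, x ∈ M → bar x ∉ M := fun x hx h1 h2 =>
          hw (F5 w hwmem x hx h1 h2)
        have hYn : ∀ y ∈ Y, y ∉ M := fun y hy h => hw (F3a y hy h)
        have hbYn : ∀ y ∈ Y, bar y ∉ M := fun y hy h => hw (F3b y hy h)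
        refine ⟨X ∩ M, Set.inter_subset_left, ?_⟩
        ext a
        rw [mem_MmodN]
        constructor
        · intro haM
          rcases mem_UallN.mp (hMU haM) with hX | hY | ⟨x, hx, rfl⟩ | ⟨y, hy, rfl⟩ | rfl | rfl
          · exact Or.inl ⟨hX, haM⟩
          · exact absurd haM (hYn a hY)
          · exact Or.inr (Or.inl ⟨x, ⟨hx, fun hxi => hnb x hx hxi.2 haM⟩, rfl⟩)
          · exact absurd haM (hbYn y hy)
          · exact Or.inr (Or.inr rfl)
          · exact absurd haM hw
        · rintro (⟨hX, hM'⟩ | ⟨x, ⟨hx, hxn⟩, rfl⟩ | rfl)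
          · exact hM'
          · exact (F1 x hx).resolve_left (fun h => hxn ⟨hx, h⟩)
          · exact hv
    · have hw : w ∈ M := F8.resolve_left hv
      right; right
      have hnbX : ∀ x ∈ X, x ∈ M → bar x ∉ M := fun x hx h1 h2 =>
        hv (F5 v hvmem x hx h1 h2)
      have hnbY : ∀ y ∈ Y, y ∈ M → bar y ∉ M := fun y hy h1 h2 =>
        hv (F6 v hvmem y hy h1 h2)
      refine ⟨X ∩ M, Set.inter_subset_left, Y ∩ M, Set.inter_subset_left, ?_, ?_⟩
      · intro c hc
        obtain ⟨b, hb, hbM⟩ := Set.not_subset.mp (fun h => hv (F7 c hc h))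
        rcases hb with ⟨a, ha, rfl⟩ | hb2
        · left
          rcases hCvars c hc (Or.inl ha) with hX | hY
          · exact ⟨a, ha, Or.inl ⟨hX, (F1 a hX).resolve_right hbM⟩⟩
          · exact ⟨a, ha, Or.inr ⟨hY, (F2 hw a hY).resolve_right hbM⟩⟩
        · right
          exact ⟨b, hb2, fun h => hbM (by rcases h with h | h; exacts [h.2, h.2])⟩
      · ext a
        rw [mem_NmodN]
        constructor
        · intro haM
          rcases mem_UallN.mp (hMU haM) with hX | hY | ⟨x, hx, rfl⟩ | ⟨y, hy, rfl⟩ | rfl | rfl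
          · exact Or.inl ⟨hX, haM⟩
          · exact Or.inr (Or.inr (Or.inl ⟨hY, haM⟩))
          · exact Or.inr (Or.inl ⟨x, ⟨hx, fun hxi => hnbX x hx hxi.2 haM⟩, rfl⟩)
          · exact Or.inr (Or.inr (Or.inr (Or.inl
              ⟨y, ⟨hy, fun hyi => hnbY y hy hyi.2 haM⟩, rfl⟩)))
          · exact absurd haM hv
          · exact Or.inr (Or.inr (Or.inr (Or.inr rfl)))
        · rintro (⟨hX, hM'⟩ | ⟨x, ⟨hx, hxn⟩, rfl⟩ | ⟨hY, hM'⟩ | ⟨y, ⟨hy, hyn⟩, rfl⟩ | rfl)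
          · exact hM'
          · exact (F1 x hx).resolve_left (fun h => hxn ⟨hx, h⟩)
          · exact hM'
          · exact (F2 hw y hy).resolve_left (fun h => hyn ⟨hy, h⟩)
          · exact hw
  · rintro (⟨J, hJY, Jstar, hJJs, hJsYY, rfl⟩ | ⟨I, hIX, rfl⟩ | ⟨I, hIX, J, hJY, hsat, rfl⟩)
    · -- O[Jstar]
      have hcover : ∀ y ∈ Y, y ∈ Jstar ∨ bar y ∈ Jstar := by
        intro y hy
        by_cases hyJ : y ∈ J
        · exact Or.inl (hJJs (Set.mem_union_left _ hyJ))
        · exact Or.inr (hJJs (Set.mem_union_right _ ⟨y, ⟨hy, hyJ⟩, rfl⟩))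
      have hzO : ∀ z ∈ X ∪ bar '' X ∪ ({v, w} : Set A), z ∈ OmodN X bar v w Jstar := by
        intro z hz
        rw [mem_OmodN]
        rcases hz with (hz | hz) | hz
        · exact Or.inl hz
        · exact Or.inr (Or.inl hz)
        · rcases hz with rfl | rfl
          · exact Or.inr (Or.inr (Or.inr (Or.inl rfl)))
          · exact Or.inr (Or.inr (Or.inr (Or.inr rfl)))
      intro r hr
      rcases hr with ((((⟨x, hx, rfl | rfl⟩ | ⟨y, hy, rfl | rfl | rfl | rfl⟩) |
        ⟨z, hz, rfl | ⟨x, hx, rfl⟩ | ⟨y, hy, rfl⟩⟩) | ⟨c, hc, rfl⟩) | rfl) <;>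
        rw [satRule_singleton]
      · exact fun _ _ => mem_OmodN.mpr (Or.inl hx)
      · exact fun _ _ => mem_OmodN.mpr (Or.inr (Or.inl ⟨x, hx, rfl⟩))
      · intro _ hn
        rcases hcover y hy with h | h
        · exact mem_OmodN.mpr (Or.inr (Or.inr (Or.inl h)))
        · exact absurd (mem_OmodN.mpr (Or.inr (Or.inr (Or.inl h))))
            (not_mem_of_inter_empty hn)
      · intro _ hn
        rcases hcover y hy with h | h
        · exact absurd (mem_OmodN.mpr (Or.inr (Or.inr (Or.inl h))))
            (not_mem_of_inter_empty hn)
        · exact mem_OmodN.mpr (Or.inr (Or.inr (Or.inl h)))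
      · exact fun _ _ => mem_OmodN.mpr (Or.inr (Or.inr (Or.inr (Or.inr rfl))))
      · exact fun _ _ => mem_OmodN.mpr (Or.inr (Or.inr (Or.inr (Or.inr rfl))))
      · exact fun _ _ => hzO z hz
      · exact fun _ _ => hzO z hz
      · exact fun _ _ => hzO z hz
      · exact fun _ _ => mem_OmodN.mpr (Or.inr (Or.inr (Or.inr (Or.inl rfl))))
      · exact fun _ _ => mem_OmodN.mpr (Or.inr (Or.inr (Or.inr (Or.inr rfl))))
    · -- M[I]
      have hvM : v ∈ MmodN X bar v I := mem_MmodN.mpr (Or.inr (Or.inr rfl))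
      have hwM : w ∉ MmodN X bar v I := by
        intro h
        rcases mem_MmodN.mp h with h | ⟨x, hx, heq⟩ | heq
        · exact hwXY (Or.inl (hIX h))
        · exact hwb ⟨x, Or.inl hx.1, heq⟩
        · exact hvw heq.symm
      have hyn : ∀ y ∈ Y, y ∉ MmodN X bar v I := by
        intro y hy h
        rcases mem_MmodN.mp h with h | ⟨x, hx, heq⟩ | heq
        · exact Set.disjoint_left.mp hXY (hIX h) hy
        · exact hbnotin x (Or.inl hx.1) (Or.inr (by rw [heq]; exact hy))
        · exact hvXY (Or.inr (by rw [← heq]; exact hy))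
      have hbyn : ∀ y ∈ Y, bar y ∉ MmodN X bar v I := by
        intro y hy h
        rcases mem_MmodN.mp h with h | ⟨x, hx, heq⟩ | heq
        · exact hbnotin y (Or.inr hy) (Or.inl (hIX h))
        · exact Set.disjoint_left.mp hXY hx.1 (by rw [hbarinj heq]; exact hy)
        · exact hvb ⟨y, Or.inr hy, heq⟩
      have hxiff : ∀ x ∈ X, (x ∈ MmodN X bar v I ↔ x ∈ I) := by
        intro x hx
        constructor
        · intro h
          rcases mem_MmodN.mp h with h | ⟨x', hx', heq⟩ | heq
          · exact h
          · exact absurd (Or.inl hx) (by rw [← heq]; exact hbnotin x' (Or.inl hx'.1))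
          · exact absurd (Or.inl hx) (by rw [heq]; exact hvXY)
        · exact fun h => mem_MmodN.mpr (Or.inl h)
      have hbxiff : ∀ x ∈ X, (bar x ∈ MmodN X bar v I ↔ x ∉ I) := by
        intro x hx
        constructor
        · intro h hxI
          rcases mem_MmodN.mp h with h | ⟨x', hx', heq⟩ | heq
          · exact hbnotin x (Or.inl hx) (Or.inl (hIX h))
          · exact hx'.2 (by rw [hbarinj heq]; exact hxI)
          · exact hvb ⟨x, Or.inl hx, heq⟩
        · exact fun h => mem_MmodN.mpr (Or.inr (Or.inl ⟨x, ⟨hx, h⟩, rfl⟩))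
      intro r hr
      rcases hr with ((((⟨x, hx, rfl | rfl⟩ | ⟨y, hy, rfl | rfl | rfl | rfl⟩) |
        ⟨z, hz, rfl | ⟨x, hx, rfl⟩ | ⟨y, hy, rfl⟩⟩) | ⟨c, hc, rfl⟩) | rfl) <;>
        rw [satRule_singleton]
      · intro _ hn
        exact (hxiff x hx).mpr (not_not.mp
          (fun h => not_mem_of_inter_empty hn ((hbxiff x hx).mpr h)))
      · intro _ hn
        exact (hbxiff x hx).mpr (fun h => not_mem_of_inter_empty hn ((hxiff x hx).mpr h))
      · exact fun hp _ => absurd (hp rfl) hwM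
      · exact fun hp _ => absurd (hp rfl) hwM
      · exact fun hp _ => absurd (hp rfl) (hyn y hy)
      · exact fun hp _ => absurd (hp rfl) (hbyn y hy)
      · exact fun hp _ => absurd (hp (Set.mem_insert_of_mem _ rfl)) hwM
      · exact fun hp _ => absurd ((hxiff x hx).mp (hp (Set.mem_insert _ _)))
          ((hbxiff x hx).mp (hp (Set.mem_insert_of_mem _ rfl)))
      · exact fun hp _ => absurd (hp (Set.mem_insert _ _)) (hyn y hy)
      · exact fun _ _ => hvM
      · exact fun _ hn => absurd hvM (not_mem_of_inter_empty hn)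
    · -- N[I, J]
      have hwM : w ∈ NmodN X Y bar w I J :=
        mem_NmodN.mpr (Or.inr (Or.inr (Or.inr (Or.inr rfl))))
      have hvM : v ∉ NmodN X Y bar w I J := by
        intro h
        rcases mem_NmodN.mp h with h | ⟨x, hx, heq⟩ | h | ⟨y, hy, heq⟩ | heq
        · exact hvXY (Or.inl (hIX h))
        · exact hvb ⟨x, Or.inl hx.1, heq⟩
        · exact hvXY (Or.inr (hJY h))
        · exact hvb ⟨y, Or.inr hy.1, heq⟩
        · exact hvw heq
      have hxiff : ∀ x ∈ X, (x ∈ NmodN X Y bar w I J ↔ x ∈ I) := by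
        intro x hx
        constructor
        · intro h
          rcases mem_NmodN.mp h with h | ⟨x', hx', heq⟩ | h | ⟨y, hy, heq⟩ | heq
          · exact h
          · exact absurd (Or.inl hx) (by rw [← heq]; exact hbnotin x' (Or.inl hx'.1))
          · exact (Set.disjoint_left.mp hXY hx (hJY h)).elim
          · exact absurd (Or.inl hx) (by rw [← heq]; exact hbnotin y (Or.inr hy.1))
          · exact absurd (Or.inl hx) (by rw [heq]; exact hwXY)
        · exact fun h => mem_NmodN.mpr (Or.inl h)
      have hbxiff : ∀ x ∈ X, (bar x ∈ NmodN X Y bar w I J ↔ x ∉ I) := by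
        intro x hx
        constructor
        · intro h hxI
          rcases mem_NmodN.mp h with h | ⟨x', hx', heq⟩ | h | ⟨y, hy, heq⟩ | heq
          · exact hbnotin x (Or.inl hx) (Or.inl (hIX h))
          · exact hx'.2 (by rw [hbarinj heq]; exact hxI)
          · exact hbnotin x (Or.inl hx) (Or.inr (hJY h))
          · exact Set.disjoint_left.mp hXY hx (by rw [← hbarinj heq]; exact hy.1)
          · exact hwb ⟨x, Or.inl hx, heq⟩
        · exact fun h => mem_NmodN.mpr (Or.inr (Or.inl ⟨x, ⟨hx, h⟩, rfl⟩))
      have hyiff : ∀ y ∈ Y, (y ∈ NmodN X Y bar w I J ↔ y ∈ J) := by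
        intro y hy
        constructor
        · intro h
          rcases mem_NmodN.mp h with h | ⟨x, hx, heq⟩ | h | ⟨y', hy', heq⟩ | heq
          · exact (Set.disjoint_left.mp hXY (hIX h) hy).elim
          · exact absurd (Or.inr hy) (by rw [← heq]; exact hbnotin x (Or.inl hx.1))
          · exact h
          · exact absurd (Or.inr hy) (by rw [← heq]; exact hbnotin y' (Or.inr hy'.1))
          · exact absurd (Or.inr hy) (by rw [heq]; exact hwXY)
        · exact fun h => mem_NmodN.mpr (Or.inr (Or.inr (Or.inl h)))
      have hbyiff : ∀ y ∈ Y, (bar y ∈ NmodN X Y bar w I J ↔ y ∉ J) := by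
        intro y hy
        constructor
        · intro h hyJ
          rcases mem_NmodN.mp h with h | ⟨x, hx, heq⟩ | h | ⟨y', hy', heq⟩ | heq
          · exact hbnotin y (Or.inr hy) (Or.inl (hIX h))
          · exact Set.disjoint_left.mp hXY hx.1 (by rw [hbarinj heq]; exact hy)
          · exact hbnotin y (Or.inr hy) (Or.inr (hJY h))
          · exact hy'.2 (by rw [hbarinj heq]; exact hyJ)
          · exact hwb ⟨y, Or.inr hy, heq⟩
        · exact fun h => mem_NmodN.mpr
            (Or.inr (Or.inr (Or.inr (Or.inl ⟨y, ⟨hy, h⟩, rfl⟩))))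
      intro r hr
      rcases hr with ((((⟨x, hx, rfl | rfl⟩ | ⟨y, hy, rfl | rfl | rfl | rfl⟩) |
        ⟨z, hz, rfl | ⟨x, hx, rfl⟩ | ⟨y, hy, rfl⟩⟩) | ⟨c, hc, rfl⟩) | rfl) <;>
        rw [satRule_singleton]
      · intro _ hn
        exact (hxiff x hx).mpr (not_not.mp
          (fun h => not_mem_of_inter_empty hn ((hbxiff x hx).mpr h)))
      · intro _ hn
        exact (hbxiff x hx).mpr (fun h => not_mem_of_inter_empty hn ((hxiff x hx).mpr h))
      · intro _ hn
        exact (hyiff y hy).mpr (not_not.mp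
          (fun h => not_mem_of_inter_empty hn ((hbyiff y hy).mpr h)))
      · intro _ hn
        exact (hbyiff y hy).mpr (fun h => not_mem_of_inter_empty hn ((hyiff y hy).mpr h))
      · exact fun _ _ => hwM
      · exact fun _ _ => hwM
      · exact fun hp _ => absurd (hp (Set.mem_insert _ _)) hvM
      · exact fun hp _ => absurd ((hxiff x hx).mp (hp (Set.mem_insert _ _)))
          ((hbxiff x hx).mp (hp (Set.mem_insert_of_mem _ rfl)))
      · exact fun hp _ => absurd ((hyiff y hy).mp (hp (Set.mem_insert _ _)))
          ((hbyiff y hy).mp (hp (Set.mem_insert_of_mem _ rfl)))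
      · intro hp _
        exfalso
        rcases hsat c hc with ⟨a, ha, haIJ⟩ | ⟨b, hb, hbIJ⟩
        · have hbaM : bar a ∈ NmodN X Y bar w I J :=
            hp (Set.mem_union_left _ ⟨a, ha, rfl⟩)
          rcases hCvars c hc (Or.inl ha) with hX | hY
          · rcases haIJ with h | h
            · exact (hbxiff a hX).mp hbaM h
            · exact Set.disjoint_left.mp hXY hX (hJY h)
          · rcases haIJ with h | h
            · exact Set.disjoint_left.mp hXY (hIX h) hY
            · exact (hbyiff a hY).mp hbaM h
        · have hbM : b ∈ NmodN X Y bar w I J := hp (Set.mem_union_right _ hb)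
          rcases hCvars c hc (Or.inr hb) with hX | hY
          · exact hbIJ (Or.inl ((hxiff b hX).mp hbM))
          · exact hbIJ (Or.inr ((hyiff b hY).mp hbM))
      · exact fun _ _ => hwM
end

section
/- Let P be a program over 𝒰 and tr(P) its stratified transformation. Then AS(P) = { M ∩ 𝒰 : M ∈ AS(tr(P)) and fail ∉ M }. -/
/-- Atoms of the transformed program: the original universe 𝒰, plus fresh atoms
α^T, α^F for each α ∈ 𝒰, plus the fresh atom `fail`. -/
inductive TAtom (A : Type) : Type
  | base : A → TAtom A
  | t : A → TAtom A
  | f : A → TAtom A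
  | fail : TAtom A

/-- The transformation tr(P): each rule r of P becomes the positive rule
H(r) ← B+(r), {α^F : α ∈ B-(r)}; in addition, for each atom α, the rules
α^T ∨ α^F ← ;  α^T ← α ;  fail ← α^T, not α. -/
def trProg {A : Type} (P : Program A) : Program (TAtom A) :=
  {r' | ∃ r ∈ P, r' = ⟨TAtom.base '' r.head, TAtom.base '' r.pos ∪ TAtom.f '' r.neg, ∅⟩} ∪
  {r' | ∃ a : A, r' = ⟨{TAtom.t a, TAtom.f a}, ∅, ∅⟩ ∨
        r' = ⟨{TAtom.t a}, {TAtom.base a}, ∅⟩ ∨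
        r' = ⟨{TAtom.fail}, {TAtom.t a}, {TAtom.base a}⟩}

/-- p depends on q (positively or negatively). -/
def depends {A : Type} (P : Program A) (p q : A) : Prop :=
  ∃ r ∈ P, p ∈ r.head ∧ (q ∈ r.pos ∨ q ∈ r.neg)

/-- p depends negatively on q. -/
def dependsNeg {A : Type} (P : Program A) (p q : A) : Prop :=
  ∃ r ∈ P, p ∈ r.head ∧ q ∈ r.neg

/-- A program is stratified if no cycle of dependencies contains a negative edge. -/
def Stratified {A : Type} (P : Program A) : Prop :=
  ∀ p q, dependsNeg P p q → ¬ Relation.ReflTransGen (depends P) q p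

namespace TrAux
variable {A : Type}

lemma inter_empty_iff {X Y : Set A} : X ∩ Y = ∅ ↔ ∀ x ∈ X, x ∉ Y := by
  rw [Set.eq_empty_iff_forall_notMem]; simp [Set.mem_inter_iff]

def MS (S : Set A) : Set (TAtom A) :=
  TAtom.base '' S ∪ TAtom.t '' S ∪ TAtom.f '' Sᶜ

@[simp] lemma mem_MS_base {S : Set A} {a : A} : TAtom.base a ∈ MS S ↔ a ∈ S := by
  simp [MS]
@[simp] lemma mem_MS_t {S : Set A} {a : A} : TAtom.t a ∈ MS S ↔ a ∈ S := by
  simp [MS]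
@[simp] lemma mem_MS_f {S : Set A} {a : A} : TAtom.f a ∈ MS S ↔ a ∉ S := by
  simp [MS]
@[simp] lemma fail_notMem_MS {S : Set A} : TAtom.fail ∉ MS S := by
  simp [MS]

lemma isModel_reduct_iff {P : Program A} {K I : Set A} :
    isModel (reduct P K) I ↔
      ∀ r ∈ P, r.neg ∩ K = ∅ → r.pos ⊆ I → (r.head ∩ I).Nonempty := by
  constructor
  · intro h r hr hneg hpos
    exact h ⟨r.head, r.pos, ∅⟩ ⟨r, hr, hneg, rfl⟩ hpos (by simp)
  · rintro h r' ⟨r, hr, hneg, rfl⟩ hpos _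
    exact h r hr hneg hpos

lemma reduct_tr_iff {P : Program A} {M : Set (TAtom A)} {r' : Rule (TAtom A)} :
    r' ∈ reduct (trProg P) M ↔
      (∃ r ∈ P, r' = ⟨TAtom.base '' r.head, TAtom.base '' r.pos ∪ TAtom.f '' r.neg, ∅⟩) ∨
      (∃ a : A, r' = ⟨{TAtom.t a, TAtom.f a}, ∅, ∅⟩) ∨
      (∃ a : A, r' = ⟨{TAtom.t a}, {TAtom.base a}, ∅⟩) ∨
      (∃ a : A, TAtom.base a ∉ M ∧ r' = ⟨{TAtom.fail}, {TAtom.t a}, ∅⟩) := by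
  constructor
  · rintro ⟨r, hr, hneg, rfl⟩
    rcases hr with ⟨r0, hr0, rfl⟩ | ⟨a, h | h | h⟩
    · exact Or.inl ⟨r0, hr0, rfl⟩
    · subst h; exact Or.inr (Or.inl ⟨a, rfl⟩)
    · subst h; exact Or.inr (Or.inr (Or.inl ⟨a, rfl⟩))
    · subst h
      refine Or.inr (Or.inr (Or.inr ⟨a, ?_, rfl⟩))
      have := inter_empty_iff.mp hneg
      exact this (TAtom.base a) rfl
  · rintro (⟨r, hr, rfl⟩ | ⟨a, rfl⟩ | ⟨a, rfl⟩ | ⟨a, ha, rfl⟩)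
    · exact ⟨_, Or.inl ⟨r, hr, rfl⟩, by simp, rfl⟩
    · exact ⟨_, Or.inr ⟨a, Or.inl rfl⟩, by simp, rfl⟩
    · exact ⟨_, Or.inr ⟨a, Or.inr (Or.inl rfl)⟩, by simp, rfl⟩
    · exact ⟨_, Or.inr ⟨a, Or.inr (Or.inr rfl)⟩, by rw [inter_empty_iff]; simpa, rfl⟩


lemma forward {P : Program A} {S : Set A} (h : isAnswerSet P S) :
    isAnswerSet (trProg P) (MS S) := by
  obtain ⟨hmod, hmin⟩ := h
  rw [isModel_reduct_iff] at hmod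
  constructor
  · -- model
    intro r' hr'
    rcases reduct_tr_iff.mp hr' with ⟨r, hr, rfl⟩ | ⟨a, rfl⟩ | ⟨a, rfl⟩ | ⟨a, ha, rfl⟩
    · intro hpos _
      have hposS : r.pos ⊆ S := by
        intro x hx
        have : TAtom.base x ∈ MS S := hpos (Or.inl ⟨x, hx, rfl⟩)
        simpa using this
      have hnegS : r.neg ∩ S = ∅ := by
        rw [inter_empty_iff]
        intro x hx
        have : TAtom.f x ∈ MS S := hpos (Or.inr ⟨x, hx, rfl⟩)
        simpa using this
      obtain ⟨b, hbH, hbS⟩ := hmod r hr hnegS hposS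
      exact ⟨TAtom.base b, ⟨b, hbH, rfl⟩, by simpa using hbS⟩
    · intro _ _
      by_cases hS : a ∈ S
      · exact ⟨TAtom.t a, by simp, by simpa⟩
      · exact ⟨TAtom.f a, by simp, by simpa⟩
    · intro hpos _
      have : a ∈ S := by simpa using hpos rfl
      exact ⟨TAtom.t a, by simp, by simpa⟩
    · intro hpos _
      have h1 : a ∈ S := by simpa using hpos rfl
      have h2 : a ∉ S := by simpa using ha
      exact absurd h1 h2
  · -- minimality
    intro N hNsub hN
    have hN' : ∀ r' , r' ∈ reduct (trProg P) (MS S) → satRule N r' := hN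
    have ht : ∀ a ∈ S, TAtom.t a ∈ N := by
      intro a haS
      have := hN' _ (reduct_tr_iff.mpr (Or.inr (Or.inl ⟨a, rfl⟩)))
        (by simp) (by simp)
      obtain ⟨x, hx1, hx2⟩ := this
      rcases hx1 with rfl | rfl
      · exact hx2
      · exact absurd (by simpa using hNsub hx2) (by simpa using haS)
    have hf : ∀ a, a ∉ S → TAtom.f a ∈ N := by
      intro a haS
      have := hN' _ (reduct_tr_iff.mpr (Or.inr (Or.inl ⟨a, rfl⟩)))
        (by simp) (by simp)
      obtain ⟨x, hx1, hx2⟩ := this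
      rcases hx1 with rfl | rfl
      · exact absurd (by simpa using hNsub hx2) (by simpa using haS)
      · exact hx2
    have hS' : TAtom.base ⁻¹' N = S := by
      apply hmin _ (fun x hx => by simpa using hNsub hx)
      rw [isModel_reduct_iff]
      intro r hr hneg hpos
      have := hN' _ (reduct_tr_iff.mpr (Or.inl ⟨r, hr, rfl⟩)) ?_ (by simp)
      · obtain ⟨x, hx1, hx2⟩ := this
        obtain ⟨b, hbH, rfl⟩ := hx1
        exact ⟨b, hbH, hx2⟩
      · rintro x (⟨b, hb, rfl⟩ | ⟨b, hb, rfl⟩)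
        · exact hpos hb
        · exact hf b (inter_empty_iff.mp hneg b hb)
    apply Set.Subset.antisymm hNsub
    rintro x ((⟨a, ha, rfl⟩ | ⟨a, ha, rfl⟩) | ⟨a, ha, rfl⟩)
    · rw [← hS'] at ha; exact ha
    · exact ht a ha
    · exact hf a ha


lemma backward {P : Program A} {M : Set (TAtom A)}
    (h : isAnswerSet (trProg P) M) (hfail : TAtom.fail ∉ M) :
    isAnswerSet P (TAtom.base ⁻¹' M) := by
  obtain ⟨hmod, hmin⟩ := h
  set S : Set A := TAtom.base ⁻¹' M with hSdef
  have hmod' : ∀ r', r' ∈ reduct (trProg P) M → satRule M r' := hmod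
  -- t a ∈ M whenever base a ∈ M
  have htM : ∀ a : A, TAtom.base a ∈ M → TAtom.t a ∈ M := by
    intro a ha
    have := hmod' _ (reduct_tr_iff.mpr (Or.inr (Or.inr (Or.inl ⟨a, rfl⟩))))
      (by simpa) (by simp)
    obtain ⟨x, hx1, hx2⟩ := this
    rcases hx1 with rfl
    exact hx2
  -- t a ∉ M whenever base a ∉ M (via fail rule)
  have htM' : ∀ a : A, TAtom.base a ∉ M → TAtom.t a ∉ M := by
    intro a ha hta
    have := hmod' _ (reduct_tr_iff.mpr (Or.inr (Or.inr (Or.inr ⟨a, ha, rfl⟩))))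
      (by simpa) (by simp)
    obtain ⟨x, hx1, hx2⟩ := this
    rcases hx1 with rfl
    exact hfail hx2
  -- f a ∈ M whenever base a ∉ M
  have hfM : ∀ a : A, TAtom.base a ∉ M → TAtom.f a ∈ M := by
    intro a ha
    have := hmod' _ (reduct_tr_iff.mpr (Or.inr (Or.inl ⟨a, rfl⟩)))
      (by simp) (by simp)
    obtain ⟨x, hx1, hx2⟩ := this
    rcases hx1 with rfl | rfl
    · exact absurd hx2 (htM' a ha)
    · exact hx2
  constructor
  · rw [isModel_reduct_iff]
    intro r hr hneg hpos
    have := hmod' _ (reduct_tr_iff.mpr (Or.inl ⟨r, hr, rfl⟩)) ?_ (by simp)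
    · obtain ⟨x, hx1, hx2⟩ := this
      obtain ⟨b, hbH, rfl⟩ := hx1
      exact ⟨b, hbH, hx2⟩
    · rintro x (⟨b, hb, rfl⟩ | ⟨b, hb, rfl⟩)
      · exact hpos hb
      · exact hfM b (inter_empty_iff.mp hneg b hb)
  · intro S' hS'sub hS'
    rw [isModel_reduct_iff] at hS'
    set N : Set (TAtom A) := TAtom.base '' S' ∪ TAtom.t '' S ∪ TAtom.f '' Sᶜ with hNdef
    have hmemN_base : ∀ a : A, TAtom.base a ∈ N ↔ a ∈ S' := by
      intro a; simp [hNdef]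
    have hmemN_t : ∀ a : A, TAtom.t a ∈ N ↔ a ∈ S := by
      intro a; simp [hNdef]
    have hmemN_f : ∀ a : A, TAtom.f a ∈ N ↔ a ∉ S := by
      intro a; simp [hNdef]
    have hNsub : N ⊆ M := by
      rintro x ((⟨a, ha, rfl⟩ | ⟨a, ha, rfl⟩) | ⟨a, ha, rfl⟩)
      · exact hS'sub ha
      · exact htM a ha
      · exact hfM a ha
    have hNM : N = M := by
      apply hmin N hNsub
      intro r' hr'
      rcases reduct_tr_iff.mp hr' with ⟨r, hr, rfl⟩ | ⟨a, rfl⟩ | ⟨a, rfl⟩ | ⟨a, ha, rfl⟩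
      · intro hpos _
        have hposS : r.pos ⊆ S' := by
          intro x hx
          exact (hmemN_base x).mp (hpos (Or.inl ⟨x, hx, rfl⟩))
        have hnegS : r.neg ∩ S = ∅ := by
          rw [inter_empty_iff]
          intro x hx
          exact (hmemN_f x).mp (hpos (Or.inr ⟨x, hx, rfl⟩))
        obtain ⟨b, hbH, hbS⟩ := hS' r hr hnegS hposS
        exact ⟨TAtom.base b, ⟨b, hbH, rfl⟩, (hmemN_base b).mpr hbS⟩
      · intro _ _
        by_cases hS : a ∈ S
        · exact ⟨TAtom.t a, by simp, (hmemN_t a).mpr hS⟩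
        · exact ⟨TAtom.f a, by simp, (hmemN_f a).mpr hS⟩
      · intro hpos _
        have : a ∈ S' := (hmemN_base a).mp (hpos rfl)
        exact ⟨TAtom.t a, by simp, (hmemN_t a).mpr (hS'sub this)⟩
      · intro hpos _
        have : a ∈ S := (hmemN_t a).mp (hpos rfl)
        exact absurd this ha
    apply Set.Subset.antisymm hS'sub
    intro a haS
    have : TAtom.base a ∈ N := hNM ▸ haS
    exact (hmemN_base a).mp this

end TrAux

/-- AS(P) = { M ∩ 𝒰 : M ∈ AS(tr(P)), fail ∉ M }. -/
theorem trProg_answerSets {A : Type} (P : Program A)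
    (hnc : ∀ r ∈ P, r.head.Nonempty) :
    ∀ S : Set A, isAnswerSet P S ↔
      ∃ M : Set (TAtom A), isAnswerSet (trProg P) M ∧ TAtom.fail ∉ M ∧
        S = TAtom.base ⁻¹' M := by
  intro S
  constructor
  · intro h
    exact ⟨TrAux.MS S, TrAux.forward h, TrAux.fail_notMem_MS, by ext a; simp⟩
  · rintro ⟨M, hM, hfail, rfl⟩
    exact TrAux.backward hM hfail
end

section
/- If P is a normal program over 𝒰, then the shifted transformation tr(P)^→ is a super-coherent normal program and AS(P) = { M ∩ 𝒰 : M ∈ AS(tr(P)^→) and fail ∉ M }. -/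
/-- The shift P^→ of a program P. -/
def shiftProg {A : Type} (P : Program A) : Program A :=
  {r ∈ P | r.head = ∅} ∪
  {r' | ∃ r ∈ P, ∃ a ∈ r.head, r' = ⟨{a}, r.pos, r.neg ∪ (r.head \ {a})⟩}

/-- Positive dependency relation. -/
def posDep {A : Type} (P : Program A) (p q : A) : Prop :=
  ∃ r ∈ P, p ∈ r.head ∧ q ∈ r.pos

/-- P is head-cycle free if no two distinct atoms jointly occurring in some rule
head depend positively and mutually on each other. -/
def headCycleFree {A : Type} (P : Program A) : Prop :=
  ∀ r ∈ P, ∀ a ∈ r.head, ∀ b ∈ r.head, a ≠ b →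
    ¬ (Relation.ReflTransGen (posDep P) a b ∧ Relation.ReflTransGen (posDep P) b a)

/-!
Since `P` is normal, the only disjunctive rules of `tr(P)` are `α^T ∨ α^F ←`, so `tr(P)^→` is
the normal program with rules `H(r) ← B⁺(r), {α^F : α ∈ B⁻(r)}`, `α^T ← not α^F`,
`α^F ← not α^T`, `α^T ← α` and `fail ← α^T, not α`. A set `N` is a model of its reduct by `M`
iff five closure conditions hold, and everything follows from them.

For super-coherence under facts `F`, take `α^F` exactly for the facts `α^F ∈ F`, the base atoms
least-closed under `P` with `not α` read as `α^F ∈ F`, `α^T` whenever it is a fact, derived, or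
`α^F` is absent, and `fail` whenever some such `α^T` has underived `α`.

An answer set `S` of `P` corresponds to the interpretation with `α, α^T` for `α ∈ S` and `α^F`
for `α ∉ S`. Conversely, in an answer set `M` without `fail` the constraint forces `α^T ↔ α`,
and minimality then removes every `α^F` with `α ∈ M`, so `M` has this shape.
-/section AnswerSets

variable {A : Type}

theorem isModel_reduct_iff {P : Program A} {M N : Set A} :
    isModel (reduct P M) N ↔ ∀ r ∈ P, r.neg ∩ M = ∅ → r.pos ⊆ N → (r.head ∩ N).Nonempty := by
  constructor
  · intro h r hr hneg hpos
    exact h ⟨r.head, r.pos, ∅⟩ ⟨r, hr, hneg, rfl⟩ hpos (Set.empty_inter N)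
  · rintro h _ ⟨r, hr, hneg, rfl⟩ hpos -
    exact h r hr hneg hpos

theorem isModel_reduct_union_factsOf {P : Program A} {F M N : Set A} :
    isModel (reduct (P ∪ factsOf F) M) N ↔ isModel (reduct P M) N ∧ F ⊆ N := by
  simp only [isModel_reduct_iff, Set.mem_union, or_imp, forall_and]
  refine and_congr_right' ⟨fun h a ha => ?_, ?_⟩
  · simpa using h _ ⟨a, ha, rfl⟩ (Set.empty_inter M) (Set.empty_subset N)
  · rintro h _ ⟨a, ha, rfl⟩ - -
    exact ⟨a, rfl, h ha⟩

def IsNormal (P : Program A) : Prop := ∀ r ∈ P, ∃ a, r.head = {a}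

def ClosedUnder (P : Program A) (B C : Set A) : Prop :=
  ∀ r ∈ P, r.pos ⊆ B → r.neg ⊆ C → r.head ⊆ B

theorem ClosedUnder.of_superset {P : Program A} {B C C' : Set A} (h : ClosedUnder P B C')
    (hC : C ⊆ C') : ClosedUnder P B C :=
  fun r hr hpos hneg => h r hr hpos (hneg.trans hC)

theorem isModel_reduct_iff_closedUnder {P : Program A} (hP : IsNormal P) {S N : Set A} :
    isModel (reduct P S) N ↔ ClosedUnder P N Sᶜ := by
  rw [isModel_reduct_iff]
  refine forall₂_congr fun r hr => ?_
  obtain ⟨a, ha⟩ := hP r hr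
  rw [ha, Set.singleton_inter_nonempty, Set.singleton_subset_iff,
    Set.subset_compl_iff_disjoint_right, Set.disjoint_iff_inter_eq_empty]
  tauto

def leastClosed (P : Program A) (D C : Set A) : Set A :=
  ⋂₀ {B | D ⊆ B ∧ ClosedUnder P B C}

theorem subset_leastClosed (P : Program A) (D C : Set A) : D ⊆ leastClosed P D C :=
  Set.subset_sInter fun _ hB => hB.1

theorem closedUnder_leastClosed (P : Program A) (D C : Set A) :
    ClosedUnder P (leastClosed P D C) C := fun r hr hpos hneg =>
  Set.subset_sInter fun _ hB => hB.2 r hr (hpos.trans (Set.sInter_subset_of_mem hB)) hneg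

theorem leastClosed_subset {P : Program A} {D C B : Set A} (hD : D ⊆ B)
    (hB : ClosedUnder P B C) : leastClosed P D C ⊆ B :=
  Set.sInter_subset_of_mem ⟨hD, hB⟩

end AnswerSets

section Transformation

variable {A : Type} {P : Program A}

open TAtom

theorem mem_shiftProg_trProg (hP : IsNormal P) {r' : Rule (TAtom A)} :
    r' ∈ shiftProg (trProg P) ↔
      (∃ r ∈ P, ∃ a ∈ r.head, r' = ⟨{base a}, base '' r.pos ∪ f '' r.neg, ∅⟩) ∨
      ∃ a, r' = ⟨{t a}, ∅, {f a}⟩ ∨ r' = ⟨{f a}, ∅, {t a}⟩ ∨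
        r' = ⟨{t a}, {base a}, ∅⟩ ∨ r' = ⟨{fail}, {t a}, {base a}⟩ := by
  constructor
  · rintro (⟨hr, hhead⟩ | ⟨r, hr, x, hx, rfl⟩)
    · rcases hr with ⟨r, hr, rfl⟩ | ⟨a, rfl | rfl | rfl⟩
      · obtain ⟨a, ha⟩ := hP r hr
        simp [ha] at hhead
      · exact absurd hhead (Set.insert_nonempty _ _).ne_empty
      all_goals simp at hhead
    · rcases hr with ⟨r, hr, rfl⟩ | ⟨a, rfl | rfl | rfl⟩
      · obtain ⟨a, ha⟩ := hP r hr
        obtain rfl : x = base a := by simpa [ha] using hx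
        exact Or.inl ⟨r, hr, a, by simp [ha], by simp [ha]⟩
      all_goals simp only [Set.mem_insert_iff, Set.mem_singleton_iff] at hx
      · rcases hx with rfl | rfl <;> simp
      all_goals subst hx; simp
  · rintro (⟨r, hr, a, ha, rfl⟩ | ⟨a, rfl | rfl | rfl | rfl⟩)
    · obtain ⟨b, hb⟩ := hP r hr
      refine Or.inr ⟨_, Or.inl ⟨r, hr, rfl⟩, base a, Set.mem_image_of_mem _ ha, ?_⟩
      simp_all
    · exact Or.inr ⟨_, Or.inr ⟨a, Or.inl rfl⟩, t a, by simp, by simp⟩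
    · exact Or.inr ⟨_, Or.inr ⟨a, Or.inl rfl⟩, f a, by simp, by simp⟩
    · exact Or.inr ⟨_, Or.inr ⟨a, Or.inr (Or.inl rfl)⟩, t a, by simp, by simp⟩
    · exact Or.inr ⟨_, Or.inr ⟨a, Or.inr (Or.inr rfl)⟩, fail, by simp, by simp⟩

theorem isModel_reduct_shiftProg_trProg_iff (hP : IsNormal P) {M N : Set (TAtom A)} :
    isModel (reduct (shiftProg (trProg P)) M) N ↔
      ClosedUnder P (base ⁻¹' N) (f ⁻¹' N) ∧
      (∀ a, f a ∉ M → t a ∈ N) ∧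
      (∀ a, t a ∉ M → f a ∈ N) ∧
      (∀ a, base a ∈ N → t a ∈ N) ∧
      (∀ a, t a ∈ N → base a ∉ M → fail ∈ N) := by
  simp only [isModel_reduct_iff, mem_shiftProg_trProg hP, or_imp, forall_and, forall_exists_index,
    and_imp, forall_eq_apply_imp_iff, Set.empty_inter, Set.singleton_inter_nonempty,
    Set.singleton_inter_eq_empty, Set.empty_subset, Set.singleton_subset_iff, true_imp_iff]
  refine and_congr ⟨fun h r hr hpos hneg a ha => ?_, ?_⟩ <| and_congr .rfl <| and_congr .rfl <|
    and_congr .rfl <| forall_congr' fun _ => imp.swap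
  · simpa using h _ r hr a ha rfl (Set.empty_inter M)
      (Set.union_subset (Set.image_subset_iff.2 hpos) (Set.image_subset_iff.2 hneg))
  · rintro h _ r hr a ha rfl - hsub
    simpa using h r hr (Set.image_subset_iff.1 (Set.subset_union_left.trans hsub))
      (Set.image_subset_iff.1 (Set.subset_union_right.trans hsub)) ha

theorem isNormal_shiftProg_trProg (hP : IsNormal P) : IsNormal (shiftProg (trProg P)) := by
  intro r hr
  rcases (mem_shiftProg_trProg hP).1 hr with ⟨-, -, a, -, rfl⟩ | ⟨a, rfl | rfl | rfl | rfl⟩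
  exacts [⟨_, rfl⟩, ⟨_, rfl⟩, ⟨_, rfl⟩, ⟨_, rfl⟩, ⟨_, rfl⟩]

variable (P) in
def canonicalModel (F : Set (TAtom A)) : Set (TAtom A)
  | base a => a ∈ leastClosed P (base ⁻¹' F) (f ⁻¹' F)
  | t a => t a ∈ F ∨ a ∈ leastClosed P (base ⁻¹' F) (f ⁻¹' F) ∨ f a ∉ F
  | f a => f a ∈ F
  | fail =>
    fail ∈ F ∨ ∃ a, (t a ∈ F ∨ f a ∉ F) ∧ a ∉ leastClosed P (base ⁻¹' F) (f ⁻¹' F)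

theorem isAnswerSet_canonicalModel (hP : IsNormal P) (F : Set (TAtom A)) :
    isAnswerSet (shiftProg (trProg P) ∪ factsOf F) (canonicalModel P F) := by
  have hF : F ⊆ canonicalModel P F := by
    rintro (a | a | a | _) h
    exacts [subset_leastClosed _ _ _ h, Or.inl h, h, Or.inl h]
  refine ⟨?_, fun N hNM hN => ?_⟩
  · rw [isModel_reduct_union_factsOf, isModel_reduct_shiftProg_trProg_iff hP]
    refine ⟨⟨closedUnder_leastClosed _ _ _, fun a h => Or.inr (Or.inr h),
      fun a h => by_contra fun h' => h (Or.inr (Or.inr h')), fun a h => Or.inr (Or.inl h),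
      fun a h hb => Or.inr ⟨a, h.imp_right (Or.resolve_left · hb), hb⟩⟩, hF⟩
  rw [isModel_reduct_union_factsOf, isModel_reduct_shiftProg_trProg_iff hP] at hN
  obtain ⟨⟨hclosed, hft, -, hbt, hfail⟩, hFN⟩ := hN
  have hbase : leastClosed P (base ⁻¹' F) (f ⁻¹' F) ⊆ base ⁻¹' N :=
    leastClosed_subset (Set.preimage_mono hFN) (hclosed.of_superset (Set.preimage_mono hFN))
  have ht : ∀ a, t a ∈ canonicalModel P F → t a ∈ N := by
    rintro a (h | h | h)
    exacts [hFN h, hbt a (hbase h), hft a h]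
  refine hNM.antisymm ?_
  rintro (a | a | a | _) h
  · exact hbase h
  · exact ht a h
  · exact hFN h
  · rcases h with h | ⟨a, ha, hb⟩
    · exact hFN h
    · exact hfail a (ht a (ha.imp_right Or.inr)) hb

/-- With `N = S` this is the interpretation of `tr(P)^→` encoding `S`; smaller `N` stand for
models of the reduct `P^S`, which is how minimality transfers in both directions. -/
def trInterp (N S : Set A) : Set (TAtom A)
  | base a => a ∈ N
  | t a => a ∈ S
  | f a => a ∉ S
  | fail => False

theorem isModel_reduct_trInterp_iff (hP : IsNormal P) {N S : Set A} (hNS : N ⊆ S) :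
    isModel (reduct (shiftProg (trProg P)) (trInterp S S)) (trInterp N S) ↔
      isModel (reduct P S) N := by
  rw [isModel_reduct_shiftProg_trProg_iff hP, isModel_reduct_iff_closedUnder hP]
  exact ⟨fun h => h.1, fun h => ⟨h, fun a ha => not_not.1 ha, fun a ha => ha,
    fun a ha => hNS ha, fun a ha hna => (hna ha).elim⟩⟩

theorem isAnswerSet_trInterp (hP : IsNormal P) {S : Set A} (hS : isAnswerSet P S) :
    isAnswerSet (shiftProg (trProg P)) (trInterp S S) := by
  refine ⟨(isModel_reduct_trInterp_iff hP le_rfl).2 hS.1, fun N hNM hN => ?_⟩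
  obtain ⟨hclosed, -, htf, hbt, -⟩ := (isModel_reduct_shiftProg_trProg_iff hP).1 hN
  have hf : f ⁻¹' N = Sᶜ := Set.Subset.antisymm (fun a h => hNM h) (fun a h => htf a h)
  have hbase : base ⁻¹' N = S :=
    hS.2 _ (fun a h => hNM h) ((isModel_reduct_iff_closedUnder hP).2 (hf ▸ hclosed))
  refine hNM.antisymm ?_
  rintro (a | a | a | _) h
  · exact hbase.ge h
  · exact hbt a (hbase.ge h)
  · exact htf a h
  · exact h.elim

theorem eq_trInterp_of_isAnswerSet (hP : IsNormal P) {M : Set (TAtom A)}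
    (hM : isAnswerSet (shiftProg (trProg P)) M) (hfail : fail ∉ M) :
    M = trInterp (base ⁻¹' M) (base ⁻¹' M) := by
  set S := base ⁻¹' M
  obtain ⟨hclosed, hft, htf, hbt, hfail'⟩ := (isModel_reduct_shiftProg_trProg_iff hP).1 hM.1
  have ht : ∀ a, t a ∈ M ↔ a ∈ S :=
    fun a => ⟨fun h => by_contra fun hb => hfail (hfail' a h hb), hbt a⟩
  have hsub : trInterp S S ⊆ M := by
    rintro (a | a | a | _) h
    exacts [h, (ht a).2 h, htf a (mt (ht a).1 h), h.elim]
  refine (hM.2 _ hsub ?_).symm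
  rw [isModel_reduct_shiftProg_trProg_iff hP]
  exact ⟨hclosed.of_superset fun a ha => htf a (mt (ht a).1 ha), fun a h => (ht a).1 (hft a h),
    fun a h => mt (ht a).2 h, fun a h => h, fun a h hb => (hb h).elim⟩

theorem isAnswerSet_of_isAnswerSet_trInterp (hP : IsNormal P) {S : Set A}
    (h : isAnswerSet (shiftProg (trProg P)) (trInterp S S)) : isAnswerSet P S := by
  refine ⟨(isModel_reduct_trInterp_iff hP le_rfl).1 h.1, fun N hNS hN => ?_⟩
  have hsub : trInterp N S ⊆ trInterp S S := by
    rintro (a | a | a | _) ha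
    exacts [hNS ha, ha, ha, ha]
  exact congrArg (base ⁻¹' ·) (h.2 _ hsub ((isModel_reduct_trInterp_iff hP hNS).2 hN))

end Transformation

/-- For a normal program P, the shifted transformation tr(P)^→ is a super-coherent
normal program with AS(P) = { M ∩ 𝒰 : M ∈ AS(tr(P)^→), fail ∉ M }. -/
theorem trProg_shift_normal_superCoherent {A : Type} (P : Program A)
    (hnormal : ∀ r ∈ P, ∃ a, r.head = {a}) :
    (∀ r ∈ shiftProg (trProg P), r.head.Subsingleton) ∧
    superCoherent (shiftProg (trProg P)) ∧
    (∀ S : Set A, isAnswerSet P S ↔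
      ∃ M : Set (TAtom A), isAnswerSet (shiftProg (trProg P)) M ∧ TAtom.fail ∉ M ∧
        S = TAtom.base ⁻¹' M) := by
  refine ⟨fun r hr => ?_, fun F => ⟨_, isAnswerSet_canonicalModel hnormal F⟩, fun S => ⟨?_, ?_⟩⟩
  · obtain ⟨a, ha⟩ := isNormal_shiftProg_trProg hnormal r hr
    exact ha ▸ Set.subsingleton_singleton
  · exact fun hS => ⟨trInterp S S, isAnswerSet_trInterp hnormal hS, id, rfl⟩
  · rintro ⟨M, hM, hfail, rfl⟩
    rw [eq_trInterp_of_isAnswerSet hnormal hM hfail] at hM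
    exact isAnswerSet_of_isAnswerSet_trInterp hnormal hM
end
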